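/- arXiv:1409.1015 — 13 statements merged into one kernel-verified Lean document; each statement's English description precedes it below -/
import Mathlib

section
/- Let $n>0$ be a real number and for $k\in\mathbb{N}$, $x\ge0$ set $p_{n,k}(x)=e^{-nx}\frac{(nx)^k}{k!}$. Then for all $x,y\ge0$, $\sum_{k=0}^{\infty}p_{n,k}(x)p_{n,k}(y) \;=\; \frac{1}{\pi}\int_{-1}^{1} e^{-n(x+y+2t\sqrt{xy})}\,\frac{dt}{\sqrt{1-t^2}}$. -/
/-!
Substituting `t = cos θ` turns the right-hand side into
`(1/π) e^{-n(x+y)} ∫₀^π e^{d cos θ} dθ` with `d = -2n√(xy)`. Expanding `e^{d cos θ}` and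
integrating termwise, the odd powers of `cos` integrate to `0` over `[0, π]` and the even ones give
the Wallis integrals `∫₀^π cos^{2k} = π (2k)! / (4^k k!²)`, so the integral is
`π ∑ (d²/4)^k / k!² = π ∑ (n²xy)^k / k!²`, which is `π e^{n(x+y)}` times the left-hand side.
-/

open MeasureTheory Real Set
open scoped Nat

theorem integral_div_sqrt_one_sub_sq_eq_integral_comp_cos (g : ℝ → ℝ) :
    ∫ t in (-1 : ℝ)..1, g t / √(1 - t ^ 2) = ∫ θ in 0..π, g (cos θ) := by
  rw [intervalIntegral.integral_of_le (by norm_num), intervalIntegral.integral_of_le pi_pos.le,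
    ← integral_Icc_eq_integral_Ioc, ← integral_Icc_eq_integral_Ioc, ← bijOn_cos.image_eq,
    integral_image_eq_integral_abs_deriv_smul measurableSet_Icc
      (fun θ _ => (hasDerivAt_cos θ).hasDerivWithinAt) injOn_cos,
    integral_Icc_eq_integral_Ioo, integral_Icc_eq_integral_Ioo]
  refine setIntegral_congr_fun measurableSet_Ioo fun θ hθ => ?_
  have hsin : 0 < sin θ := sin_pos_of_pos_of_lt_pi hθ.1 hθ.2
  rw [← sin_sq, sqrt_sq hsin.le, abs_neg, abs_of_pos hsin, smul_eq_mul,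
    mul_div_cancel₀ _ hsin.ne']

theorem integral_cos_pow_add_two_zero_pi (n : ℕ) :
    ∫ θ in 0..π, cos θ ^ (n + 2) = (n + 1) / (n + 2) * ∫ θ in 0..π, cos θ ^ n := by
  simp [integral_cos_pow]

theorem integral_cos_pow_odd_zero_pi (k : ℕ) : ∫ θ in 0..π, cos θ ^ (2 * k + 1) = 0 := by
  induction k with
  | zero => simp
  | succ k ih => rw [show 2 * (k + 1) + 1 = 2 * k + 1 + 2 by ring,
      integral_cos_pow_add_two_zero_pi, ih, mul_zero]

theorem integral_cos_pow_even_zero_pi (k : ℕ) :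
    ∫ θ in 0..π, cos θ ^ (2 * k) = π * (2 * k)! / (4 ^ k * (k ! : ℝ) ^ 2) := by
  induction k with
  | zero => simp
  | succ k ih =>
    rw [show 2 * (k + 1) = 2 * k + 2 by ring, integral_cos_pow_add_two_zero_pi, ih,
      Nat.factorial_succ, Nat.factorial_succ, Nat.factorial_succ]
    push_cast
    field_simp
    ring

theorem hasSum_integral_exp_mul_cos_pow (d : ℝ) :
    HasSum (fun m : ℕ => d ^ m / m ! * ∫ θ in 0..π, cos θ ^ m)
      (∫ θ in 0..π, exp (d * cos θ)) := by
  simp_rw [← intervalIntegral.integral_const_mul]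
  refine intervalIntegral.hasSum_integral_of_dominated_convergence (fun m _ => |d| ^ m / m !)
    (fun m => by fun_prop) (fun m => ae_of_all _ fun θ _ => ?_)
    (ae_of_all _ fun _ _ => Real.summable_pow_div_factorial |d|) intervalIntegrable_const
    (ae_of_all _ fun θ _ => ?_)
  · rw [norm_mul, norm_div, norm_pow, norm_pow, Real.norm_eq_abs, Real.norm_eq_abs,
      Nat.abs_cast]
    exact mul_le_of_le_one_right (by positivity) (pow_le_one₀ (abs_nonneg _) (abs_cos_le_one θ))
  · simpa [exp_eq_exp_ℝ, mul_pow, div_mul_eq_mul_div, mul_comm] using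
      NormedSpace.expSeries_div_hasSum_exp (d * cos θ)

theorem hasSum_integral_exp_mul_cos (d : ℝ) :
    HasSum (fun k : ℕ => π * ((d ^ 2 / 4) ^ k / (k ! : ℝ) ^ 2))
      (∫ θ in 0..π, exp (d * cos θ)) := by
  have hodd : ∀ m ∉ range (2 * ·), d ^ m / m ! * ∫ θ in 0..π, cos θ ^ m = 0 := by
    intro m hm
    obtain ⟨k, rfl⟩ : Odd m :=
      Nat.not_even_iff_odd.mp fun ⟨k, hk⟩ => hm ⟨k, show 2 * k = m by omega⟩
    rw [integral_cos_pow_odd_zero_pi, mul_zero]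
  convert ((mul_right_injective₀ two_ne_zero).hasSum_iff hodd).mpr
    (hasSum_integral_exp_mul_cos_pow d) using 2 with k
  rw [Function.comp_apply, integral_cos_pow_even_zero_pi, pow_mul, div_pow]
  field_simp

theorem stmt_2_general (n : ℝ) (x y : ℝ) (hx : 0 ≤ x) (hy : 0 ≤ y) :
    (∑' k : ℕ,
      (Real.exp (-n * x) * (n * x) ^ k / (k.factorial : ℝ)) *
      (Real.exp (-n * y) * (n * y) ^ k / (k.factorial : ℝ))) =
    (1 / Real.pi) * ∫ t in (-1:ℝ)..1,
      Real.exp (-n * (x + y + 2 * t * Real.sqrt (x * y))) / Real.sqrt (1 - t ^ 2) := by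
  set d := -2 * n * √(x * y) with hd_def
  have hd : d ^ 2 / 4 = n ^ 2 * (x * y) := by
    rw [mul_pow, sq_sqrt (mul_nonneg hx hy)]
    ring
  have hfactor : ∀ θ, exp (-n * (x + y + 2 * cos θ * √(x * y))) =
      exp (-n * x) * exp (-n * y) * exp (d * cos θ) := fun θ => by
    rw [← exp_add, ← exp_add, hd_def]
    ring_nf
  rw [integral_div_sqrt_one_sub_sq_eq_integral_comp_cos
      fun t => exp (-n * (x + y + 2 * t * √(x * y))),
    intervalIntegral.integral_congr fun θ _ => hfactor θ, intervalIntegral.integral_const_mul]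
  have h := (hasSum_integral_exp_mul_cos d).mul_left (exp (-n * x) * exp (-n * y) / π)
  rw [hd] at h
  calc
    _ = ∑' k : ℕ, exp (-n * x) * exp (-n * y) / π * (π * ((n ^ 2 * (x * y)) ^ k / (k ! : ℝ) ^ 2)) :=
      tsum_congr fun k => by
        field_simp
        ring
    _ = _ := h.tsum_eq
    _ = _ := by ring

/-- For `n > 0` and the Szász–Mirakjan weights `p k x = e^{-nx}(nx)^k/k!`,
`∑ p k x * p k y = (1/π) ∫_{-1}^1 e^{-n(x+y+2t√(xy))} dt/√(1-t²)`. -/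
theorem stmt_2 (n : ℝ) (hn : 0 < n) (x y : ℝ) (hx : 0 ≤ x) (hy : 0 ≤ y) :
    (∑' k : ℕ,
      (Real.exp (-n * x) * (n * x) ^ k / (k.factorial : ℝ)) *
      (Real.exp (-n * y) * (n * y) ^ k / (k.factorial : ℝ))) =
    (1 / Real.pi) * ∫ t in (-1:ℝ)..1,
      Real.exp (-n * (x + y + 2 * t * Real.sqrt (x * y))) / Real.sqrt (1 - t ^ 2) :=
  stmt_2_general n x y hx hy
end

section
/- Let $c>0$ and $n>c$ be real numbers, and define $S(x)=\sum_{k=0}^{\infty}\left(\frac{(n/c)_k}{k!}(cx)^k(1+cx)^{-n/c-k}\right)^2$ for $x\ge0$, where $(a)_k$ is the ascending Pochhammer symbol. Then $S$ is twice differentiable on $(0,\infty)$ and for every $x>0$, $x(1+cx)(1+2cx)\,S''(x)+\big(4(n+c)x(1+cx)+1\big)S'(x)+2n(1+2cx)\,S(x)=0$. -/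
/-!
Put `ν = n / c` and `q(x) = (cx / (1 + cx))²`. Squaring the `k`-th term of `S` gives
`(1 + cx)^(-2ν) a_k q(x)^k` with `a_k = ((ν)_k / k!)²` the coefficients of `₂F₁(ν, ν; 1; ·)`,
so `S(x) = (1 + cx)^(-2ν) F(q(x))` with `F = ₂F₁(ν, ν; 1; ·)`. The coefficients grow
polynomially, so `F` can be differentiated termwise twice on `(-1, 1)`, and the recursion
`(k + 1)² a_{k+1} = (k + ν)² a_k` turns into the hypergeometric equation
`z(1 - z)F'' + (1 - (2ν + 1)z)F' - ν²F = 0`. By the chain rule, the left-hand side of the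
equation for `S` at `x` is `4c · cx / (1 + cx) · (1 + cx)^(-2ν)` times the left-hand side of the
hypergeometric equation at `z = q(x)`.
-/

open FormalMultilinearSeries Filter Topology Set Nat

def coeffDeriv (a : ℕ → ℝ) (k : ℕ) : ℝ := (k + 1) * a (k + 1)

lemma summable_succ_pow_mul_geometric (m : ℕ) {r : ℝ} (hr : |r| < 1) :
    Summable fun k : ℕ => ((k : ℝ) + 1) ^ m * r ^ k := by
  simp_rw [add_pow, one_pow, mul_one, Finset.sum_mul]
  refine summable_sum fun i _ => ?_
  simpa [mul_comm, mul_left_comm, mul_assoc] using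
    (summable_pow_mul_geometric_of_norm_lt_one i (r := r) hr).mul_left (m.choose i : ℝ)

section PolynomialGrowth

variable {a : ℕ → ℝ} {C : ℝ} {m : ℕ}

lemma abs_coeffDeriv_le (ha : ∀ k, |a k| ≤ C * (k + 1) ^ m) (k : ℕ) :
    |coeffDeriv a k| ≤ 2 ^ m * C * (k + 1) ^ (m + 1) := by
  calc |coeffDeriv a k| = (k + 1) * |a (k + 1)| := by
        rw [coeffDeriv, abs_mul, abs_of_pos (by positivity)]
    _ ≤ (k + 1) * (C * (2 * (k + 1)) ^ m) := by
        gcongr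
        refine (ha (k + 1)).trans ?_
        have hC : 0 ≤ C := (abs_nonneg _).trans (by simpa using ha 0)
        gcongr
        push_cast
        linarith
    _ = 2 ^ m * C * (k + 1) ^ (m + 1) := by rw [mul_pow]; ring

lemma hasSum_ofScalarsSum (ha : ∀ k, |a k| ≤ C * (k + 1) ^ m) {z : ℝ} (hz : |z| < 1) :
    HasSum (fun k => a k * z ^ k) (ofScalarsSum (E := ℝ) a z) := by
  have hgeom := summable_succ_pow_mul_geometric m (r := |z|) (by rwa [abs_abs])
  have hs : Summable fun k => a k * z ^ k :=
    .of_norm_bounded (hgeom.mul_left C) fun k => by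
      rw [Real.norm_eq_abs, abs_mul, abs_pow, ← mul_assoc]
      gcongr
      exact ha k
  simpa [ofScalarsSum_eq_tsum] using hs.hasSum

lemma hasDerivAt_ofScalarsSum (ha : ∀ k, |a k| ≤ C * (k + 1) ^ m) {z : ℝ} (hz : |z| < 1) :
    HasDerivAt (ofScalarsSum (E := ℝ) a) (ofScalarsSum (E := ℝ) (coeffDeriv a) z) z := by
  obtain ⟨r, hzr, hr1⟩ := exists_between hz
  have hr : |r| < 1 := by rwa [abs_of_pos ((abs_nonneg z).trans_lt hzr)]
  have hzt : z ∈ Ioo (-r) r := ⟨by linarith [neg_abs_le z], (le_abs_self z).trans_lt hzr⟩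
  have hshift : HasDerivAt (fun w => ∑' k, a (k + 1) * w ^ (k + 1))
      (∑' k, coeffDeriv a k * z ^ k) z := by
    refine hasDerivAt_tsum_of_isPreconnected (g' := fun k w => coeffDeriv a k * w ^ k)
      ((summable_succ_pow_mul_geometric (m + 1) hr).mul_left (2 ^ m * C)) isOpen_Ioo
      isPreconnected_Ioo (fun k w _ => ?_) (fun k w hw => ?_) hzt
      ((summable_nat_add_iff 1).mpr (hasSum_ofScalarsSum ha hz).summable) hzt
    · exact ((hasDerivAt_pow (k + 1) w).const_mul (a (k + 1))).congr_deriv (by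
        simp only [coeffDeriv, Nat.add_sub_cancel]; push_cast; ring)
    · have hwr : |w| ≤ r := abs_le.2 ⟨hw.1.le, hw.2.le⟩
      rw [Real.norm_eq_abs, abs_mul, abs_pow, ← mul_assoc]
      exact mul_le_mul (abs_coeffDeriv_le ha k) (pow_le_pow_left₀ (abs_nonneg w) hwr k)
        (by positivity) ((abs_nonneg _).trans (abs_coeffDeriv_le ha k))
  have heq : ofScalarsSum (E := ℝ) a =ᶠ[𝓝 z] fun w => a 0 + ∑' k, a (k + 1) * w ^ (k + 1) := by
    filter_upwards [(isOpen_lt continuous_abs continuous_const).mem_nhds hz] with w hw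
    rw [← (hasSum_ofScalarsSum ha hw).tsum_eq,
      (hasSum_ofScalarsSum ha hw).summable.tsum_eq_zero_add]
    simp
  simpa [ofScalarsSum_eq_tsum] using (hshift.const_add (a 0)).congr_of_eventuallyEq heq

end PolynomialGrowth

theorem hypergeometric_ode_of_hasSum {a : ℕ → ℝ} {α β γ z f f₁ f₂ : ℝ}
    (hrec : ∀ k : ℕ, (k + 1) * (k + γ) * a (k + 1) = (k + α) * (k + β) * a k)
    (hf : HasSum (fun k => a k * z ^ k) f)
    (hf₁ : HasSum (fun k => coeffDeriv a k * z ^ k) f₁)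
    (hf₂ : HasSum (fun k => coeffDeriv (coeffDeriv a) k * z ^ k) f₂) :
    z * (1 - z) * f₂ + (γ - (α + β + 1) * z) * f₁ - α * β * f = 0 := by
  have hzf₁ : HasSum (fun k : ℕ => k * a k * z ^ k) (z * f₁) := by
    refine (hasSum_nat_add_iff' 1).mp ?_
    simp only [Finset.sum_range_one, Nat.cast_zero, zero_mul, sub_zero]
    refine (hf₁.mul_left z).congr_fun fun k => ?_
    simp only [coeffDeriv]; push_cast; ring
  have hzf₂ : HasSum (fun k : ℕ => k * coeffDeriv a k * z ^ k) (z * f₂) := by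
    refine (hasSum_nat_add_iff' 1).mp ?_
    simp only [Finset.sum_range_one, Nat.cast_zero, zero_mul, sub_zero]
    refine (hf₂.mul_left z).congr_fun fun k => ?_
    simp only [coeffDeriv]; push_cast; ring
  have hzzf₂ : HasSum (fun k : ℕ => k * (k - 1) * a k * z ^ k) (z ^ 2 * f₂) := by
    refine (hasSum_nat_add_iff' 2).mp ?_
    simp only [Finset.sum_range_succ, Finset.sum_range_zero, Nat.cast_zero, Nat.cast_one,
      sub_self, zero_mul, mul_zero, zero_add, sub_zero]
    refine (hf₂.mul_left (z ^ 2)).congr_fun fun k => ?_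
    simp only [coeffDeriv]; push_cast; ring
  have hlhs : HasSum (fun k : ℕ => (k + 1) * (k + γ) * a (k + 1) * z ^ k) (z * f₂ + γ * f₁) :=
    (hzf₂.add (hf₁.mul_left γ)).congr_fun fun k => by simp only [coeffDeriv]; ring
  have hrhs : HasSum (fun k : ℕ => (k + α) * (k + β) * a k * z ^ k)
      (z ^ 2 * f₂ + (α + β + 1) * (z * f₁) + α * β * f) :=
    ((hzzf₂.add (hzf₁.mul_left (α + β + 1))).add (hf.mul_left (α * β))).congr_fun fun k => by
      ring
  simp_rw [hrec] at hlhs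
  linear_combination hlhs.unique hrhs

lemma ordinaryHypergeometricCoefficient_succ {𝕂 : Type*} [Field 𝕂] [CharZero 𝕂] (a b c : 𝕂)
    {k : ℕ} (hc : c + k ≠ 0) :
    (k + 1) * (k + c) * ordinaryHypergeometricCoefficient a b c (k + 1) =
      (k + a) * (k + b) * ordinaryHypergeometricCoefficient a b c k := by
  have hk : (k : 𝕂) + 1 ≠ 0 := by exact_mod_cast k.succ_ne_zero
  simp only [ordinaryHypergeometricCoefficient, ascPochhammer_succ_eval, factorial_succ,
    cast_mul, cast_add, cast_one, mul_inv]
  rw [add_comm (k : 𝕂) c]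
  field_simp
  ring

lemma add_mul_pow_le_mul_add_one_pow {x : ℝ} (hx : 0 ≤ x) (m : ℕ) :
    (x + m) * x ^ m ≤ x * (x + 1) ^ m := by
  cases m with
  | zero => simp
  | succ m =>
    calc (x + (m + 1 : ℕ)) * x ^ (m + 1) = x * (x ^ (m + 1) + (m + 1 : ℕ) * x ^ m * 1) := by
          push_cast; ring
      _ ≤ x * (x + 1) ^ (m + 1) := by
          gcongr
          simpa using pow_add_mul_le_add_pow hx (by linarith : (0 : ℝ) ≤ 2 * x + 1) (m + 1)

lemma abs_ascPochhammer_eval_le {ν : ℝ} {m : ℕ} (hν : |ν| ≤ m) (k : ℕ) :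
    |(ascPochhammer ℝ k).eval ν| ≤ k ! * ((k : ℝ) + 1) ^ m := by
  induction k with
  | zero => simp
  | succ k ih =>
    have hνk : |ν + k| ≤ k + 1 + m := by
      have := abs_add_le ν (k : ℝ)
      rw [Nat.abs_cast] at this
      linarith
    calc |(ascPochhammer ℝ (k + 1)).eval ν| = |(ascPochhammer ℝ k).eval ν| * |ν + k| := by
          rw [ascPochhammer_succ_eval, abs_mul]
      _ ≤ (k ! * ((k : ℝ) + 1) ^ m) * (k + 1 + m) := by gcongr
      _ ≤ k ! * (((k : ℝ) + 1) * ((k : ℝ) + 1 + 1) ^ m) := by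
          rw [mul_assoc, mul_comm (((k : ℝ) + 1) ^ m)]
          exact mul_le_mul_of_nonneg_left
            (add_mul_pow_le_mul_add_one_pow (by positivity) m) (by positivity)
      _ = (k + 1)! * (((k + 1 : ℕ) : ℝ) + 1) ^ m := by push_cast [factorial_succ]; ring

lemma abs_ordinaryHypergeometricCoefficient_le {a b : ℝ} {m₁ m₂ : ℕ} (ha : |a| ≤ m₁)
    (hb : |b| ≤ m₂) (k : ℕ) :
    |ordinaryHypergeometricCoefficient a b (1 : ℝ) k| ≤ ((k : ℝ) + 1) ^ (m₁ + m₂) := by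
  have hk : (0 : ℝ) < k ! := by positivity
  rw [ordinaryHypergeometricCoefficient, ascPochhammer_eval_one, abs_mul, abs_mul, abs_mul,
    abs_inv, abs_of_pos hk, pow_add]
  calc (k ! : ℝ)⁻¹ * |(ascPochhammer ℝ k).eval a| * |(ascPochhammer ℝ k).eval b| * (k ! : ℝ)⁻¹
      = (|(ascPochhammer ℝ k).eval a| / k !) * (|(ascPochhammer ℝ k).eval b| / k !) := by ring
    _ ≤ ((k : ℝ) + 1) ^ m₁ * ((k : ℝ) + 1) ^ m₂ := by
        gcongr
        · rw [div_le_iff₀' hk]; exact abs_ascPochhammer_eval_le ha k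
        · rw [div_le_iff₀' hk]; exact abs_ascPochhammer_eval_le hb k

noncomputable def sqRatio (c x : ℝ) : ℝ := (c * x / (1 + c * x)) ^ 2

section Transformation

variable {c ν x : ℝ}

lemma abs_sqRatio_lt_one (hc : 0 ≤ c) (hx : 0 ≤ x) : |sqRatio c x| < 1 := by
  have h : 0 < 1 + c * x := by positivity
  rw [sqRatio, abs_of_nonneg (sq_nonneg _), sq_lt_one_iff₀ (by positivity), div_lt_one h]
  linarith

lemma hasDerivAt_one_add_mul_rpow (p : ℝ) (hx : 0 < 1 + c * x) :
    HasDerivAt (fun y => (1 + c * y) ^ p) (p * c * (1 + c * x) ^ p / (1 + c * x)) x := by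
  refine ((((hasDerivAt_id x).const_mul c).const_add 1).rpow_const (p := p)
    (Or.inl hx.ne')).congr_deriv ?_
  simp only [id_eq]
  rw [Real.rpow_sub_one hx.ne']
  ring

lemma hasDerivAt_sqRatio (hx : 0 < 1 + c * x) :
    HasDerivAt (sqRatio c) (2 * c * (c * x) / (1 + c * x) ^ 3) x := by
  have hlin : HasDerivAt (fun y => c * y) c x := by simpa using (hasDerivAt_id x).const_mul c
  have hratio := hlin.fun_div (hlin.const_add 1) hx.ne'
  refine (hratio.fun_pow 2).congr_deriv ?_
  norm_num
  field_simp
  ring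

lemma hasDerivAt_sqRatio_deriv (hx : 0 < 1 + c * x) :
    HasDerivAt (fun y => 2 * c * (c * y) / (1 + c * y) ^ 3)
      (2 * c ^ 2 * (1 - 2 * c * x) / (1 + c * x) ^ 4) x := by
  have hlin : HasDerivAt (fun y => c * y) c x := by simpa using (hasDerivAt_id x).const_mul c
  refine ((hlin.const_mul (2 * c)).fun_div ((hlin.const_add 1).fun_pow 3)
    (by positivity)).congr_deriv ?_
  field_simp
  ring

variable {f f₁ f₂ : ℝ → ℝ}

lemma hasDerivAt_rpow_mul_comp_sqRatio (hx : 0 < 1 + c * x)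
    (hf : HasDerivAt f (f₁ (sqRatio c x)) (sqRatio c x)) :
    HasDerivAt (fun y => (1 + c * y) ^ (-2 * ν) * f (sqRatio c y))
      ((1 + c * x) ^ (-2 * ν) * (2 * c * (c * x) / (1 + c * x) ^ 3 * f₁ (sqRatio c x) -
        2 * ν * c / (1 + c * x) * f (sqRatio c x))) x := by
  refine ((hasDerivAt_one_add_mul_rpow (-2 * ν) hx).fun_mul
    (hf.comp x (hasDerivAt_sqRatio hx))).congr_deriv ?_
  simp only [Function.comp_apply]
  field_simp
  ring

lemma hasDerivAt_rpow_mul_comp_sqRatio_deriv (hx : 0 < 1 + c * x)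
    (hf : HasDerivAt f (f₁ (sqRatio c x)) (sqRatio c x))
    (hf₁ : HasDerivAt f₁ (f₂ (sqRatio c x)) (sqRatio c x)) :
    HasDerivAt (fun y => (1 + c * y) ^ (-2 * ν) * (2 * c * (c * y) / (1 + c * y) ^ 3 *
        f₁ (sqRatio c y) - 2 * ν * c / (1 + c * y) * f (sqRatio c y)))
      (c ^ 2 * (1 + c * x) ^ (-2 * ν) *
        (2 * ν * (2 * ν + 1) / (1 + c * x) ^ 2 * f (sqRatio c x) +
          (2 * (1 - 2 * c * x) - 8 * ν * (c * x)) / (1 + c * x) ^ 4 * f₁ (sqRatio c x) +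
          4 * (c * x) ^ 2 / (1 + c * x) ^ 6 * f₂ (sqRatio c x))) x := by
  have hq := hasDerivAt_sqRatio hx
  have hlin : HasDerivAt (fun y => 1 + c * y) c x := by
    simpa using ((hasDerivAt_id x).const_mul c).const_add 1
  refine ((hasDerivAt_one_add_mul_rpow (-2 * ν) hx).fun_mul
    (((hasDerivAt_sqRatio_deriv hx).fun_mul (hf₁.comp x hq)).fun_sub
      (((hasDerivAt_const x (2 * ν * c)).fun_div hlin hx.ne').fun_mul
        (hf.comp x hq)))).congr_deriv ?_
  simp only [Function.comp_apply]
  field_simp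
  ring

theorem ode_rpow_mul_comp_sqRatio (hc : 0 < c) {S : ℝ → ℝ}
    (hf : ∀ z, |z| < 1 → HasDerivAt f (f₁ z) z) (hf₁ : ∀ z, |z| < 1 → HasDerivAt f₁ (f₂ z) z)
    (hode : ∀ z, |z| < 1 →
      z * (1 - z) * f₂ z + (1 - (ν + ν + 1) * z) * f₁ z - ν * ν * f z = 0)
    (hS : ∀ y, 0 < y → S y = (1 + c * y) ^ (-2 * ν) * f (sqRatio c y)) (hx : 0 < x) :
    DifferentiableAt ℝ S x ∧ DifferentiableAt ℝ (deriv S) x ∧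
      x * (1 + c * x) * (1 + 2 * c * x) * deriv (deriv S) x +
        (4 * (c * ν + c) * x * (1 + c * x) + 1) * deriv S x +
        2 * (c * ν) * (1 + 2 * c * x) * S x = 0 := by
  have hu : ∀ {y}, 0 < y → 0 < 1 + c * y := fun hy => by positivity
  have hq : ∀ {y}, 0 < y → |sqRatio c y| < 1 := fun hy => abs_sqRatio_lt_one hc.le hy.le
  have hS₁ : ∀ y, 0 < y → HasDerivAt S ((1 + c * y) ^ (-2 * ν) * (2 * c * (c * y) /
      (1 + c * y) ^ 3 * f₁ (sqRatio c y) - 2 * ν * c / (1 + c * y) * f (sqRatio c y))) y :=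
    fun y hy => (hasDerivAt_rpow_mul_comp_sqRatio (hu hy) (hf _ (hq hy))).congr_of_eventuallyEq
      (eventually_of_mem (Ioi_mem_nhds hy) hS)
  have hS₂ := (hasDerivAt_rpow_mul_comp_sqRatio_deriv (ν := ν) (hu hx) (hf _ (hq hx))
    (hf₁ _ (hq hx))).congr_of_eventuallyEq
      (eventually_of_mem (Ioi_mem_nhds hx) fun y hy => (hS₁ y hy).deriv)
  refine ⟨(hS₁ x hx).differentiableAt, hS₂.differentiableAt, ?_⟩
  rw [hS₂.deriv, (hS₁ x hx).deriv, hS x hx]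
  have hode_x := hode _ (hq hx)
  rw [sqRatio] at hode_x ⊢
  have := (hu hx).ne'
  linear_combination (norm := skip)
    (4 * c * (c * x) / (1 + c * x) * (1 + c * x) ^ (-2 * ν)) * hode_x
  field_simp
  ring

end Transformation

lemma sq_pochhammer_mul_rpow_eq {c ν x : ℝ} (hx : 0 < 1 + c * x) (k : ℕ) :
    ((ascPochhammer ℝ k).eval ν / k ! * (c * x) ^ k * (1 + c * x) ^ (-ν - k)) ^ 2 =
      (1 + c * x) ^ (-2 * ν) *
        (ordinaryHypergeometricCoefficient ν ν (1 : ℝ) k • sqRatio c x ^ k) := by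
  have hsplit : (1 + c * x) ^ (-ν - k) = (1 + c * x) ^ (-ν) / (1 + c * x) ^ k := by
    rw [Real.rpow_sub hx, Real.rpow_natCast]
  have hsq : ((1 + c * x) ^ (-ν)) ^ 2 = (1 + c * x) ^ (-2 * ν) := by
    rw [← Real.rpow_natCast, ← Real.rpow_mul hx.le]
    ring_nf
  rw [hsplit, ordinaryHypergeometricCoefficient, ascPochhammer_eval_one, smul_eq_mul, sqRatio,
    ← pow_mul, div_pow, ← hsq]
  have := hx.ne'
  field_simp
  ring

theorem stmt_5_general (c n : ℝ) (hc : 0 < c)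
    (S : ℝ → ℝ)
    (hS : ∀ x : ℝ, S x = ∑' k : ℕ,
      ((ascPochhammer ℝ k).eval (n / c) / (k.factorial : ℝ) * (c * x) ^ k *
          (1 + c * x) ^ (-(n / c) - (k : ℝ))) ^ 2) :
    (∀ x : ℝ, 0 < x → DifferentiableAt ℝ S x ∧ DifferentiableAt ℝ (deriv S) x) ∧
    (∀ x : ℝ, 0 < x →
      x * (1 + c * x) * (1 + 2 * c * x) * deriv (deriv S) x +
        (4 * (n + c) * x * (1 + c * x) + 1) * deriv S x +
        2 * n * (1 + 2 * c * x) * S x = 0) := by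
  set ν := n / c with hν
  have hn : n = c * ν := by rw [hν]; field_simp
  set a := ordinaryHypergeometricCoefficient ν ν (1 : ℝ)
  obtain ⟨m, hm⟩ : ∃ m : ℕ, |ν| ≤ m := ⟨_, Nat.le_ceil _⟩
  have ha : ∀ k, |a k| ≤ 1 * ((k : ℝ) + 1) ^ (m + m) := fun k => by
    rw [one_mul]; exact abs_ordinaryHypergeometricCoefficient_le hm hm k
  have ha₁ := abs_coeffDeriv_le ha
  have ha₂ := abs_coeffDeriv_le ha₁
  have hode : ∀ z, |z| < 1 → z * (1 - z) * ofScalarsSum (coeffDeriv (coeffDeriv a)) z +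
      (1 - (ν + ν + 1) * z) * ofScalarsSum (coeffDeriv a) z - ν * ν * ofScalarsSum a z = 0 :=
    fun z hz => hypergeometric_ode_of_hasSum
      (fun k => ordinaryHypergeometricCoefficient_succ ν ν 1 (by positivity))
      (hasSum_ofScalarsSum ha hz) (hasSum_ofScalarsSum ha₁ hz) (hasSum_ofScalarsSum ha₂ hz)
  have hS' : ∀ y, 0 < y → S y = (1 + c * y) ^ (-2 * ν) * ofScalarsSum a (sqRatio c y) := by
    intro y hy
    rw [hS, ofScalars_sum_eq, ← tsum_mul_left]
    exact tsum_congr fun k => sq_pochhammer_mul_rpow_eq (by positivity) k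
  have hsol := fun x (hx : 0 < x) => ode_rpow_mul_comp_sqRatio hc
    (fun z hz => hasDerivAt_ofScalarsSum ha hz) (fun z hz => hasDerivAt_ofScalarsSum ha₁ hz)
    hode hS' hx
  rw [hn]
  exact ⟨fun x hx => ⟨(hsol x hx).1, (hsol x hx).2.1⟩, fun x hx => (hsol x hx).2.2⟩

/-- For `c > 0`, `n > c`, the function `S = S_{n,c}` is twice differentiable on
`(0,∞)` and satisfies `x(1+cx)(1+2cx)S'' + (4(n+c)x(1+cx)+1)S' + 2n(1+2cx)S = 0` there. -/
theorem stmt_5 (c n : ℝ) (hc : 0 < c) (hn : c < n)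
    (S : ℝ → ℝ)
    (hS : ∀ x : ℝ, S x = ∑' k : ℕ,
      ((ascPochhammer ℝ k).eval (n / c) / (k.factorial : ℝ) * (c * x) ^ k *
          (1 + c * x) ^ (-(n / c) - (k : ℝ))) ^ 2) :
    (∀ x : ℝ, 0 < x → DifferentiableAt ℝ S x ∧ DifferentiableAt ℝ (deriv S) x) ∧
    (∀ x : ℝ, 0 < x →
      x * (1 + c * x) * (1 + 2 * c * x) * deriv (deriv S) x +
        (4 * (n + c) * x * (1 + c * x) + 1) * deriv S x +
        2 * n * (1 + 2 * c * x) * S x = 0) :=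
  stmt_5_general c n hc S hS
end

section
/- Let $n\in\mathbb{N}$, $n\ge1$, and define $F_n(x)=\sum_{k=0}^{n}\binom{n}{k}^2 x^{2k}(1-x)^{2(n-k)}$ and $P_n(t)=2^{-n}\sum_{k=0}^{n}\binom{n}{k}^2(t+1)^k(t-1)^{n-k}$ (the $n$-th Legendre polynomial). Then for every $x\in[0,1/2)$, setting $t=\frac{2x^2-2x+1}{1-2x}$, one has $t\ge1$ and $F_n(x)=\big(t-\sqrt{t^2-1}\big)^n\,P_n(t)$. -/
/-!
With `u = 1 - 2x > 0` the parameter `t = (2x² - 2x + 1)/u` satisfies `t + 1 = (2/u)(1 - x)²`,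
`t - 1 = (2/u)x²` and `t² - 1 = (2x(1 - x)/u)²`, so `t - √(t² - 1) = u`. Pulling the common
factor `2/u` out of the homogeneous sum defining `Pₙ(t)` leaves `uⁿ Pₙ(t) = ∑ C(n,k)² (1-x)^{2k} x^{2(n-k)}`,
which is `Fₙ(x)` after the reflection `k ↦ n - k`.
-/

open Finset

section HomogeneousSums

variable {R : Type*} [CommSemiring R]

theorem sum_range_succ_mul_pow_mul_pow_mul_left (n : ℕ) (f : ℕ → R) (c a b : R) :
    ∑ k ∈ range (n + 1), f k * (c * a) ^ k * (c * b) ^ (n - k) =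
      c ^ n * ∑ k ∈ range (n + 1), f k * a ^ k * b ^ (n - k) := by
  rw [mul_sum]
  refine sum_congr rfl fun k hk => ?_
  have hkn : k ≤ n := Nat.lt_succ_iff.mp (mem_range.mp hk)
  rw [mul_pow, mul_pow, ← pow_mul_pow_sub c hkn]
  ring

theorem sum_range_succ_choose_sq_mul_pow_mul_pow_comm (n : ℕ) (a b : R) :
    ∑ k ∈ range (n + 1), (n.choose k : R) ^ 2 * a ^ k * b ^ (n - k) =
      ∑ k ∈ range (n + 1), (n.choose k : R) ^ 2 * b ^ k * a ^ (n - k) := by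
  rw [← sum_range_reflect]
  refine sum_congr rfl fun k hk => ?_
  have hkn : k ≤ n := Nat.lt_succ_iff.mp (mem_range.mp hk)
  rw [Nat.add_sub_cancel, Nat.sub_sub_self hkn, Nat.choose_symm hkn]
  ring

end HomogeneousSums

section LegendreParameter

variable {x : ℝ}

theorem one_le_legendreParam (hx : x < 1 / 2) : 1 ≤ (2 * x ^ 2 - 2 * x + 1) / (1 - 2 * x) := by
  rw [le_div_iff₀ (by linarith)]
  nlinarith

theorem legendreParam_add_one (hx : x < 1 / 2) :
    (2 * x ^ 2 - 2 * x + 1) / (1 - 2 * x) + 1 = 2 / (1 - 2 * x) * (1 - x) ^ 2 := by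
  have : 1 - 2 * x ≠ 0 := by linarith
  field_simp
  ring

theorem legendreParam_sub_one (hx : x < 1 / 2) :
    (2 * x ^ 2 - 2 * x + 1) / (1 - 2 * x) - 1 = 2 / (1 - 2 * x) * x ^ 2 := by
  have : 1 - 2 * x ≠ 0 := by linarith
  field_simp
  ring

theorem legendreParam_sub_sqrt (hx : x ∈ Set.Ico (0 : ℝ) (1 / 2)) :
    (2 * x ^ 2 - 2 * x + 1) / (1 - 2 * x) -
        √(((2 * x ^ 2 - 2 * x + 1) / (1 - 2 * x)) ^ 2 - 1) = 1 - 2 * x := by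
  obtain ⟨hx0, hx2⟩ := hx
  have hu : 0 < 1 - 2 * x := by linarith
  have hsq : ((2 * x ^ 2 - 2 * x + 1) / (1 - 2 * x)) ^ 2 - 1 =
      (2 * x * (1 - x) / (1 - 2 * x)) ^ 2 := by
    field_simp
    ring
  rw [hsq, Real.sqrt_sq (div_nonneg (by nlinarith) hu.le)]
  field_simp
  ring

end LegendreParameter

theorem stmt_7_general (n : ℕ) (x : ℝ) (hx : x ∈ Set.Ico (0:ℝ) (1/2)) :
    1 ≤ (2 * x ^ 2 - 2 * x + 1) / (1 - 2 * x) ∧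
    (∑ k ∈ Finset.range (n + 1), (n.choose k : ℝ) ^ 2 * x ^ (2 * k) * (1 - x) ^ (2 * (n - k))) =
      ((2 * x ^ 2 - 2 * x + 1) / (1 - 2 * x) -
          Real.sqrt (((2 * x ^ 2 - 2 * x + 1) / (1 - 2 * x)) ^ 2 - 1)) ^ n *
        ((2 : ℝ) ^ n)⁻¹ *
        (∑ k ∈ Finset.range (n + 1), (n.choose k : ℝ) ^ 2 *
          ((2 * x ^ 2 - 2 * x + 1) / (1 - 2 * x) + 1) ^ k *
          ((2 * x ^ 2 - 2 * x + 1) / (1 - 2 * x) - 1) ^ (n - k)) := by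
  refine ⟨one_le_legendreParam hx.2, ?_⟩
  have hcancel : (1 - 2 * x) ^ n * ((2 : ℝ) ^ n)⁻¹ * (2 ^ n / (1 - 2 * x) ^ n) = 1 := by
    have : (1 : ℝ) - 2 * x ≠ 0 := by linarith [hx.2]
    field_simp
  simp only [pow_mul]
  rw [legendreParam_sub_sqrt hx, legendreParam_add_one hx.2, legendreParam_sub_one hx.2,
    sum_range_succ_mul_pow_mul_pow_mul_left, sum_range_succ_choose_sq_mul_pow_mul_pow_comm,
    div_pow, ← mul_assoc, hcancel, one_mul]

/-- For `n ≥ 1` and `x ∈ [0,1/2)`, with `t = (2x²-2x+1)/(1-2x)`, one has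
`t ≥ 1` and `F_n(x) = (t-√(t²-1))ⁿ Pₙ(t)` where `Pₙ` is the `n`-th Legendre polynomial. -/
theorem stmt_7 (n : ℕ) (hn : 1 ≤ n) (x : ℝ) (hx : x ∈ Set.Ico (0:ℝ) (1/2)) :
    1 ≤ (2 * x ^ 2 - 2 * x + 1) / (1 - 2 * x) ∧
    (∑ k ∈ Finset.range (n + 1), (n.choose k : ℝ) ^ 2 * x ^ (2 * k) * (1 - x) ^ (2 * (n - k))) =
      ((2 * x ^ 2 - 2 * x + 1) / (1 - 2 * x) -
          Real.sqrt (((2 * x ^ 2 - 2 * x + 1) / (1 - 2 * x)) ^ 2 - 1)) ^ n *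
        ((2 : ℝ) ^ n)⁻¹ *
        (∑ k ∈ Finset.range (n + 1), (n.choose k : ℝ) ^ 2 *
          ((2 * x ^ 2 - 2 * x + 1) / (1 - 2 * x) + 1) ^ k *
          ((2 * x ^ 2 - 2 * x + 1) / (1 - 2 * x) - 1) ^ (n - k)) :=
  stmt_7_general n x hx
end

section
/- Let $n\in\mathbb{N}$, $n\ge1$, and define $F_n(x)=\sum_{k=0}^{n}\binom{n}{k}^2 x^{2k}(1-x)^{2(n-k)}$. Then $F_n$ is monotonically decreasing on $[0,1/2]$ and monotonically increasing on $[1/2,1]$. -/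
/-!
Write `b k = bernsteinPolynomial n k` and `F_{n+1} = ∑ₖ (bernsteinPolynomial (n+1) k)²`. The
derivative rule `b'_{n+1,k+1} = (n+1)(b k - b (k+1))` together with the recurrence
`b_{n+1,k+1} = X b k + (1-X) b (k+1)` telescopes to
`F'_{n+1} = 2(n+1)(2X-1) ∑ₖ b k (b k - b (k+1))`,
and the last sum is nonnegative at every real point since twice it equals
`∑ₖ (b k - b (k+1))² + (b 0)²`. So `F_{n+1}` falls on `(-∞, 1/2]` and rises on `[1/2, ∞)`.
-/

open Polynomial Finset

namespace bernsteinPolynomial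

variable {R : Type*} [CommRing R]

theorem succ_zero (n : ℕ) :
    bernsteinPolynomial R (n + 1) 0 = (1 - X) * bernsteinPolynomial R n 0 := by
  simp [bernsteinPolynomial, pow_succ']

theorem succ_succ (n ν : ℕ) :
    bernsteinPolynomial R (n + 1) (ν + 1) =
      X * bernsteinPolynomial R n ν + (1 - X) * bernsteinPolynomial R n (ν + 1) := by
  rcases lt_or_ge ν n with h | h
  · obtain ⟨d, rfl⟩ := Nat.exists_eq_add_of_lt h
    simp only [bernsteinPolynomial, Nat.choose_succ_succ, Nat.cast_add,
      show ν + d + 1 + 1 - (ν + 1) = d + 1 by omega, show ν + d + 1 - ν = d + 1 by omega,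
      show ν + d + 1 - (ν + 1) = d by omega]
    ring
  · rw [eq_zero_of_lt R (Nat.lt_succ_of_le h)]
    simp only [bernsteinPolynomial, Nat.choose_succ_succ,
      Nat.choose_eq_zero_of_lt (Nat.lt_succ_of_le h), Nat.add_sub_add_right, add_zero]
    ring

end bernsteinPolynomial

section ShiftedSums

variable {R : Type*} [CommRing R] (b : ℕ → R) {m : ℕ}

theorem sum_sq_sub_sq_succ (hb : b (m + 1) = 0) :
    ∑ j ∈ range (m + 1), (b j ^ 2 - b (j + 1) ^ 2) = b 0 ^ 2 := by
  rw [sum_range_sub' (fun j => b j ^ 2), hb]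
  ring

theorem sum_lerp_mul_sub_succ (x : R) (hb : b (m + 1) = 0) :
    ∑ j ∈ range (m + 1), (x * b j + (1 - x) * b (j + 1)) * (b j - b (j + 1)) =
      (2 * x - 1) * ∑ j ∈ range (m + 1), b j * (b j - b (j + 1)) + (1 - x) * b 0 ^ 2 := by
  rw [← sum_sq_sub_sq_succ b hb, mul_sum, mul_sum, ← sum_add_distrib]
  exact sum_congr rfl fun j _ => by ring

theorem sum_mul_sub_succ_nonneg [LinearOrder R] [IsStrictOrderedRing R] (hb : b (m + 1) = 0) :
    0 ≤ ∑ j ∈ range (m + 1), b j * (b j - b (j + 1)) := by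
  have htwice : 2 * ∑ j ∈ range (m + 1), b j * (b j - b (j + 1)) =
      ∑ j ∈ range (m + 1), (b j - b (j + 1)) ^ 2 + b 0 ^ 2 := by
    rw [← sum_sq_sub_sq_succ b hb, mul_sum, ← sum_add_distrib]
    exact sum_congr rfl fun j _ => by ring
  have : 0 ≤ ∑ j ∈ range (m + 1), (b j - b (j + 1)) ^ 2 := sum_nonneg fun j _ => sq_nonneg _
  linarith [sq_nonneg (b 0)]

end ShiftedSums

section SumSqBernstein

variable (R : Type*) [CommRing R]

noncomputable def sumSqBernstein (n : ℕ) : R[X] :=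
  ∑ ν ∈ range (n + 1), bernsteinPolynomial R n ν ^ 2

variable {R}

theorem eval_sumSqBernstein (n : ℕ) (x : R) :
    (sumSqBernstein R n).eval x =
      ∑ k ∈ range (n + 1), (n.choose k : R) ^ 2 * x ^ (2 * k) * (1 - x) ^ (2 * (n - k)) := by
  simp only [sumSqBernstein, bernsteinPolynomial, eval_finsetSum, eval_pow, eval_mul,
    eval_natCast, eval_X, eval_sub, eval_one]
  exact sum_congr rfl fun k _ => by ring

theorem derivative_sumSqBernstein_succ (n : ℕ) :
    derivative (sumSqBernstein R (n + 1)) =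
      2 * ((n : R[X]) + 1) * (2 * X - 1) * ∑ ν ∈ range (n + 1),
        bernsteinPolynomial R n ν * (bernsteinPolynomial R n ν - bernsteinPolynomial R n (ν + 1)) := by
  have key := sum_lerp_mul_sub_succ (bernsteinPolynomial R n) X
    (bernsteinPolynomial.eq_zero_of_lt R n.lt_succ_self)
  rw [mul_assoc, eq_sub_of_add_eq key.symm, mul_sub, mul_sum, sumSqBernstein, derivative_sum,
    sum_range_succ', sub_eq_add_neg]
  simp only [derivative_sq, C_ofNat, bernsteinPolynomial.derivative_succ,
    bernsteinPolynomial.derivative_zero, Nat.add_sub_cancel, Nat.cast_succ]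
  simp only [bernsteinPolynomial.succ_succ, bernsteinPolynomial.succ_zero]
  exact congrArg₂ (· + ·) (sum_congr rfl fun j _ => by ring) (by ring)

end SumSqBernstein

theorem eval_derivative_sumSqBernstein_succ_eq_mul_nonneg (n : ℕ) (x : ℝ) :
    ∃ c ≥ 0, (derivative (sumSqBernstein ℝ (n + 1))).eval x = (2 * x - 1) * c := by
  refine ⟨2 * (n + 1) * ∑ ν ∈ range (n + 1), (bernsteinPolynomial ℝ n ν).eval x *
    ((bernsteinPolynomial ℝ n ν).eval x - (bernsteinPolynomial ℝ n (ν + 1)).eval x), ?_, ?_⟩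
  · exact mul_nonneg (by positivity)
      (sum_mul_sub_succ_nonneg _ (by simp [bernsteinPolynomial.eq_zero_of_lt]))
  · simp only [derivative_sumSqBernstein_succ, eval_mul, eval_ofNat, eval_add, eval_natCast,
      eval_one, eval_sub, eval_X, eval_finsetSum]
    ring

theorem antitoneOn_sumSqBernstein_succ (n : ℕ) :
    AntitoneOn (fun x : ℝ => (sumSqBernstein ℝ (n + 1)).eval x) (Set.Iic (1 / 2)) := by
  refine antitoneOn_of_deriv_nonpos (convex_Iic _) (Polynomial.continuousOn _)
    (Polynomial.differentiableOn _) fun x hx => ?_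
  rw [interior_Iic] at hx
  obtain ⟨c, hc, hD⟩ := eval_derivative_sumSqBernstein_succ_eq_mul_nonneg n x
  rw [Polynomial.deriv, hD]
  exact mul_nonpos_of_nonpos_of_nonneg (by linarith [hx.out]) hc

theorem monotoneOn_sumSqBernstein_succ (n : ℕ) :
    MonotoneOn (fun x : ℝ => (sumSqBernstein ℝ (n + 1)).eval x) (Set.Ici (1 / 2)) := by
  refine monotoneOn_of_deriv_nonneg (convex_Ici _) (Polynomial.continuousOn _)
    (Polynomial.differentiableOn _) fun x hx => ?_
  rw [interior_Ici] at hx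
  obtain ⟨c, hc, hD⟩ := eval_derivative_sumSqBernstein_succ_eq_mul_nonneg n x
  rw [Polynomial.deriv, hD]
  exact mul_nonneg (by linarith [hx.out]) hc

/-- For `n ≥ 1`, `F_n` is decreasing on `[0,1/2]` and increasing on `[1/2,1]`. -/
theorem stmt_8 (n : ℕ) (hn : 1 ≤ n) :
    AntitoneOn
      (fun x : ℝ => ∑ k ∈ Finset.range (n + 1),
        (n.choose k : ℝ) ^ 2 * x ^ (2 * k) * (1 - x) ^ (2 * (n - k)))
      (Set.Icc (0:ℝ) (1/2)) ∧
    MonotoneOn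
      (fun x : ℝ => ∑ k ∈ Finset.range (n + 1),
        (n.choose k : ℝ) ^ 2 * x ^ (2 * k) * (1 - x) ^ (2 * (n - k)))
      (Set.Icc (1/2 : ℝ) 1) := by
  obtain ⟨m, rfl⟩ := Nat.exists_eq_add_of_le' hn
  simp only [← eval_sumSqBernstein]
  exact ⟨(antitoneOn_sumSqBernstein_succ m).mono Set.Icc_subset_Iic_self,
    (monotoneOn_sumSqBernstein_succ m).mono Set.Icc_subset_Ici_self⟩
end

section
/- Let $n\in\mathbb{N}$, $n\ge1$, and define $F_n(x)=\sum_{k=0}^{n}\binom{n}{k}^2 x^{2k}(1-x)^{2(n-k)}$. Then $F_n$ is a convex function on $[0,1]$. -/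
/-!
Writing `b_k(x) = C(n,k) x^k (1-x)^(n-k)` and `ζ` for a primitive `(n+1)`-th root of unity,
`∑_k b_k(x) ζ^(jk) = (x ζ^j + 1 - x)^n`, so the discrete Parseval identity gives
`(n+1) F_n(x) = ∑_j |x ζ^j + 1 - x|^(2n) = ∑_j (1 - c_j x(1-x))^n`
with `c_j = 2 - 2 cos(2πj/(n+1)) ∈ [0,4]`. Each `1 - c x(1-x)` with `0 ≤ c ≤ 4` is a nonnegative convex quadratic, so its powers are convex.
-/

open Finset

theorem ConvexOn.sum {𝕜 E β ι : Type*} [Semiring 𝕜] [PartialOrder 𝕜] [AddCommMonoid E]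
    [AddCommMonoid β] [PartialOrder β] [IsOrderedAddMonoid β] [SMul 𝕜 E] [Module 𝕜 β]
    {s : Set E} (hs : Convex 𝕜 s) {t : Finset ι} {f : ι → E → β}
    (hf : ∀ i ∈ t, ConvexOn 𝕜 s (f i)) : ConvexOn 𝕜 s fun x => ∑ i ∈ t, f i x := by
  classical
  induction t using Finset.induction_on with
  | empty => simpa using convexOn_const 0 hs
  | insert i t hi ih =>
    simp only [sum_insert hi]
    exact (hf i (mem_insert_self i t)).add (ih fun j hj => hf j (mem_insert_of_mem hj))

section Quadratic

variable {c : ℝ}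

theorem convexOn_one_sub_mul_mul_one_sub (hc : 0 ≤ c) :
    ConvexOn ℝ Set.univ fun x : ℝ => 1 - c * (x * (1 - x)) := by
  refine ⟨convex_univ, fun x _ y _ a b ha hb hab => sub_nonneg.1 ?_⟩
  calc
    (0 : ℝ) ≤ c * (a * b) * (x - y) ^ 2 := by positivity
    _ = _ := by obtain rfl := eq_sub_of_add_eq hab; simp only [smul_eq_mul]; ring

theorem one_sub_mul_mul_one_sub_nonneg (hc : 0 ≤ c) (hc4 : c ≤ 4) (x : ℝ) :
    0 ≤ 1 - c * (x * (1 - x)) := by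
  nlinarith [mul_nonneg hc (sq_nonneg (2 * x - 1))]

theorem convexOn_one_sub_mul_mul_one_sub_pow (hc : 0 ≤ c) (hc4 : c ≤ 4) (n : ℕ) :
    ConvexOn ℝ Set.univ fun x : ℝ => (1 - c * (x * (1 - x))) ^ n :=
  (convexOn_one_sub_mul_mul_one_sub hc).pow
    (fun x _ => one_sub_mul_mul_one_sub_nonneg hc hc4 x) n

end Quadratic

namespace IsPrimitiveRoot

variable {K : Type*} [Field K] {ζ : K} {N : ℕ}

theorem sum_pow_mul_inv_pow (hζ : IsPrimitiveRoot ζ N) {k l : ℕ} (hk : k < N) (hl : l < N) :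
    ∑ j ∈ range N, ζ ^ (k * j) * (ζ ^ (l * j))⁻¹ = if k = l then (N : K) else 0 := by
  have hζ0 : ζ ≠ 0 := hζ.ne_zero (by omega)
  set w := ζ ^ k * (ζ ^ l)⁻¹
  have hw : ∀ j, ζ ^ (k * j) * (ζ ^ (l * j))⁻¹ = w ^ j := fun j => by
    rw [pow_mul, pow_mul, mul_pow, inv_pow]
  simp only [hw]
  split_ifs with hkl
  · simp [w, hkl, mul_inv_cancel₀ (pow_ne_zero l hζ0)]
  · have hw1 : w ≠ 1 := fun h => hkl <|
      hζ.pow_inj hk hl ((mul_inv_eq_one₀ (pow_ne_zero l hζ0)).mp h)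
    have hwN : w ^ N = 1 := by
      rw [mul_pow, inv_pow, ← pow_mul, ← pow_mul, mul_comm k, mul_comm l, pow_mul, pow_mul,
        hζ.pow_eq_one, one_pow, one_pow, inv_one, mul_one]
    rw [geom_sum_eq hw1, hwN, sub_self, zero_div]

/-- Discrete Parseval identity. -/
theorem sum_mul_sum_inv (hζ : IsPrimitiveRoot ζ N) (a b : ℕ → K) :
    ∑ j ∈ range N, (∑ k ∈ range N, a k * ζ ^ (k * j)) * ∑ l ∈ range N, b l * (ζ ^ (l * j))⁻¹
      = N * ∑ k ∈ range N, a k * b k := by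
  calc
    _ = ∑ k ∈ range N, ∑ l ∈ range N,
          a k * b l * ∑ j ∈ range N, ζ ^ (k * j) * (ζ ^ (l * j))⁻¹ := by
      simp_rw [sum_mul_sum, mul_sum]
      rw [sum_comm]
      refine sum_congr rfl fun k _ => ?_
      rw [sum_comm]
      exact sum_congr rfl fun l _ => sum_congr rfl fun j _ => by ring
    _ = ∑ k ∈ range N, a k * b k * N := by
      refine sum_congr rfl fun k hk => ?_
      rw [sum_eq_single k]
      · rw [hζ.sum_pow_mul_inv_pow (mem_range.1 hk) (mem_range.1 hk), if_pos rfl]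
      · intro l hl hlk
        rw [hζ.sum_pow_mul_inv_pow (mem_range.1 hk) (mem_range.1 hl), if_neg (Ne.symm hlk),
          mul_zero]
      · exact fun h => absurd hk h
    _ = _ := by rw [mul_sum]; exact sum_congr rfl fun k _ => mul_comm _ _

theorem sum_pow_eq_mul_sum_sq_bernstein {n : ℕ} (hζ : IsPrimitiveRoot ζ (n + 1)) (x : K) :
    ∑ j ∈ range (n + 1), ((x * ζ ^ j + (1 - x)) * (x * (ζ ^ j)⁻¹ + (1 - x))) ^ n
      = (n + 1) * ∑ k ∈ range (n + 1), ((n.choose k : K) * x ^ k * (1 - x) ^ (n - k)) ^ 2 := by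
  set a : ℕ → K := fun k => n.choose k * x ^ k * (1 - x) ^ (n - k)
  have expand : ∀ j, (x * ζ ^ j + (1 - x)) ^ n = ∑ k ∈ range (n + 1), a k * ζ ^ (k * j) :=
    fun j => by
      rw [add_pow]
      exact sum_congr rfl fun k _ => by rw [mul_pow, ← pow_mul, mul_comm j]; ring
  have expand_inv : ∀ j,
      (x * (ζ ^ j)⁻¹ + (1 - x)) ^ n = ∑ k ∈ range (n + 1), a k * (ζ ^ (k * j))⁻¹ :=
    fun j => by
      rw [add_pow]
      exact sum_congr rfl fun k _ => by rw [mul_pow, inv_pow, ← pow_mul, mul_comm j]; ring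
  simp_rw [mul_pow (_ + _), expand, expand_inv]
  rw [hζ.sum_mul_sum_inv, Nat.cast_succ]
  simp only [a, sq]

end IsPrimitiveRoot

open Complex in
theorem mul_exp_mul_I_add_one_sub_mul_inv (x θ : ℝ) :
    ((x : ℂ) * exp (θ * I) + (1 - x)) * (x * (exp (θ * I))⁻¹ + (1 - x))
      = ((1 - (2 - 2 * Real.cos θ) * (x * (1 - x)) : ℝ) : ℂ) := by
  have hcos := two_cos θ
  have hinv : exp (θ * I) * exp (-θ * I) = 1 := by rw [← exp_add]; simp
  rw [← exp_neg, ← neg_mul]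
  push_cast
  linear_combination (x : ℂ) ^ 2 * hinv - (x : ℂ) * (1 - x) * hcos

open Real in
theorem mul_sum_sq_bernstein_eq_sum_pow (n : ℕ) (x : ℝ) :
    ((n : ℝ) + 1) * ∑ k ∈ range (n + 1), ((n.choose k : ℝ) * x ^ k * (1 - x) ^ (n - k)) ^ 2
      = ∑ j ∈ range (n + 1), (1 - (2 - 2 * cos (2 * π * j / (n + 1))) * (x * (1 - x))) ^ n := by
  set ζ := Complex.exp (2 * π * Complex.I / (n + 1 : ℕ))
  have hζ : IsPrimitiveRoot ζ (n + 1) := Complex.isPrimitiveRoot_exp _ n.succ_ne_zero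
  have hζj : ∀ j : ℕ, ζ ^ j = Complex.exp ((2 * π * j / (n + 1) : ℝ) * Complex.I) := fun j => by
    rw [← Complex.exp_nat_mul]
    push_cast
    ring_nf
  have h := hζ.sum_pow_eq_mul_sum_sq_bernstein (x : ℂ)
  simp only [hζj, mul_exp_mul_I_add_one_sub_mul_inv] at h
  exact_mod_cast h.symm

theorem stmt_9_general (n : ℕ) :
    ConvexOn ℝ (Set.Icc (0:ℝ) 1)
      (fun x : ℝ => ∑ k ∈ Finset.range (n + 1),
        (n.choose k : ℝ) ^ 2 * x ^ (2 * k) * (1 - x) ^ (2 * (n - k))) := by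
  set c : ℕ → ℝ := fun j => 2 - 2 * Real.cos (2 * Real.pi * j / (n + 1))
  have hconv : ConvexOn ℝ Set.univ fun x : ℝ =>
      ((n : ℝ) + 1)⁻¹ • ∑ j ∈ range (n + 1), (1 - c j * (x * (1 - x))) ^ n :=
    (ConvexOn.sum convex_univ fun j _ => convexOn_one_sub_mul_mul_one_sub_pow
      (by linarith [Real.cos_le_one (2 * Real.pi * j / (n + 1))])
      (by linarith [Real.neg_one_le_cos (2 * Real.pi * j / (n + 1))]) n).smul (by positivity)
  refine (hconv.subset (Set.subset_univ _) (convex_Icc 0 1)).congr fun x _ => ?_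
  simp only [c, smul_eq_mul]
  rw [← mul_sum_sq_bernstein_eq_sum_pow, inv_mul_cancel_left₀ (by positivity)]
  exact sum_congr rfl fun k _ => by rw [mul_pow, mul_pow, ← pow_mul, ← pow_mul, mul_comm k,
    mul_comm (n - k)]

/-- For `n ≥ 1`, `F_n` is convex on `[0,1]`. -/
theorem stmt_9 (n : ℕ) (hn : 1 ≤ n) :
    ConvexOn ℝ (Set.Icc (0:ℝ) 1)
      (fun x : ℝ => ∑ k ∈ Finset.range (n + 1),
        (n.choose k : ℝ) ^ 2 * x ^ (2 * k) * (1 - x) ^ (2 * (n - k))) :=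
  stmt_9_general n
end

section
/- Let $n\in\mathbb{N}$, $n\ge1$. Then for every real $x$, $\sum_{k=0}^{n}\binom{n}{k}^2 x^{2k}(1-x)^{2(n-k)} \;=\; 4^{-n}\binom{2n}{n}\sum_{k=0}^{n} 4^k\binom{n}{k}^2\binom{2n}{2k}^{-1}\left(x-\tfrac{1}{2}\right)^{2k}$. -/
/-!
Put `a = x`, `b = 1 - x`. Since `C(2n,n) C(n,k)² = C(2n,2k) C(2k,k) C(2n-2k,n-k)`, the identity reads
`4ⁿ Σₖ C(n,k)² a^{2k} b^{2(n-k)} = Σ_{i+j=n} C(2i,i) C(2j,j) (a-b)^{2i} (a+b)^{2j}`,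
and this holds for all `a`, `b`: both sides have generating function
`((1 - 4(a-b)²t) (1 - 4(a+b)²t))^{-1/2}`, so they satisfy the same three-term recurrence of
Legendre type and agree by induction. The recurrence is checked coefficientwise on the left and by
applying the Euler operator to the convolution on the right.
-/

open Finset Nat

theorem sum_range_mul_shift {R : Type*} [Semiring R] (c M : ℕ → R) {m s N : ℕ}
    (hN : m + s < N) (hc : ∀ k, m < k → c k = 0) :
    ∑ k ∈ range (m + 1), c k * M (k + s) =
      ∑ j ∈ range N, (if s ≤ j then c (j - s) else 0) * M j := by
  obtain ⟨t, rfl⟩ := Nat.exists_eq_add_of_le (show s ≤ N by omega)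
  have hlow : ∑ j ∈ range s, (if s ≤ j then c (j - s) else 0) * M j = 0 :=
    sum_eq_zero fun j hj => by simp [(mem_range.1 hj).not_ge]
  rw [sum_range_add _ s, hlow, zero_add]
  simp only [Nat.le_add_right, if_true, Nat.add_sub_cancel_left]
  refine (sum_subset (range_subset_range.2 (by omega : m + 1 ≤ t)) fun k _ hk => ?_).trans
    (sum_congr rfl fun k _ => by rw [add_comm])
  rw [hc k (by simpa using hk), zero_mul]

namespace Nat

theorem mul_choose_succ_sq (n k : ℕ) :
    n * n.choose (k + 1) ^ 2 = n.choose k * n.choose (k + 1) + n.choose (k + 1) * n.choose (k + 2)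
      + (n + 2) * n.choose k * n.choose (k + 2) := by
  rcases lt_or_ge n (k + 2) with h | h
  · rcases (show n < k + 1 ∨ n = k + 1 by omega) with h' | rfl
    · simp [choose_eq_zero_of_lt h', choose_eq_zero_of_lt h]
    · simp
  obtain ⟨m, rfl⟩ := Nat.exists_eq_add_of_le h
  have h₁ := choose_succ_right_eq (k + 2 + m) k
  have h₂ := choose_succ_right_eq (k + 2 + m) (k + 1)
  rw [show k + 2 + m - k = m + 2 by omega] at h₁
  rw [show k + 2 + m - (k + 1) = m + 1 by omega] at h₂
  apply Nat.eq_of_mul_eq_mul_right (show 0 < (k + 2) * (m + 2) by positivity)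
  set x := (k + 2 + m).choose k
  set y := (k + 2 + m).choose (k + 1)
  set z := (k + 2 + m).choose (k + 2)
  zify at *
  linear_combination ((k + 2) * y + (k + m + 4) * (k + 2) * z) * h₁
    - ((m + 2) * y + (k + m + 4) * (k + 1) * y) * h₂

theorem choose_sq_recurrence (n k : ℕ) :
    (n + 2) * (n + 2).choose (k + 2) ^ 2 + (n + 1) * (n.choose k ^ 2 + n.choose (k + 2) ^ 2) =
      (2 * n + 3) * ((n + 1).choose (k + 1) ^ 2 + (n + 1).choose (k + 2) ^ 2)
        + 2 * (n + 1) * n.choose (k + 1) ^ 2 := by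
  simp only [choose_succ_succ']
  linear_combination 2 * (mul_choose_succ_sq n k).symm

theorem centralBinom_mul_choose_sq {n k : ℕ} (hk : k ≤ n) :
    (2 * n).choose n * n.choose k ^ 2 =
      (2 * n).choose (2 * k) * centralBinom k * centralBinom (n - k) := by
  obtain ⟨m, rfl⟩ := Nat.exists_eq_add_of_le hk
  have h₁ := choose_mul (n := 2 * (k + m)) (k := k + m) (s := k) (by omega)
  have h₂ := choose_mul (n := 2 * (k + m)) (k := 2 * k) (s := k) (by omega)
  have h₃ := choose_mul (n := k + 2 * m) (k := k + m) (s := k) (by omega)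
  have h₄ := choose_symm_of_eq_add (show k + 2 * m = m + (k + m) by omega)
  simp only [centralBinom_eq_two_mul_choose, Nat.add_sub_cancel_left]
  rw [show 2 * (k + m) - k = k + 2 * m by omega, show k + m - k = m by omega] at h₁
  rw [show 2 * (k + m) - k = k + 2 * m by omega, show 2 * k - k = k by omega] at h₂
  rw [show k + 2 * m - k = 2 * m by omega, show k + m - k = m by omega] at h₃
  calc (2 * (k + m)).choose (k + m) * (k + m).choose k ^ 2
      = (2 * (k + m)).choose k * (k + 2 * m).choose (k + m) * (k + m).choose k := by
        rw [sq, ← mul_assoc, h₁, h₄]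
    _ = (2 * (k + m)).choose (2 * k) * (2 * k).choose k * (2 * m).choose m := by
        rw [mul_assoc, h₃, ← mul_assoc, ← h₂]

end Nat

section ChooseSq

variable {R : Type*} [CommRing R]

def chooseSqSum (n : ℕ) (A B : R) : R :=
  ∑ k ∈ range (n + 1), (n.choose k ^ 2 : R) * (A ^ k * B ^ (n - k))

theorem chooseSqSum_add_two (n : ℕ) (A B : R) :
    (n + 2) * chooseSqSum (n + 2) A B =
      (2 * n + 3) * (A + B) * chooseSqSum (n + 1) A B
        - (n + 1) * (A - B) ^ 2 * chooseSqSum n A B := by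
  set M : ℕ → R := fun j => A ^ j * B ^ (n + 2 - j)
  have shift (m s t : ℕ) (h : m + s + t = n + 2) : A ^ s * B ^ t * chooseSqSum m A B =
      ∑ j ∈ range (n + 3), (if s ≤ j then (m.choose (j - s) ^ 2 : R) else 0) * M j := by
    refine Eq.trans ?_ (sum_range_mul_shift (m := m) (s := s) (fun k => (m.choose k ^ 2 : R)) M
      (by omega) fun k hk => by simp [choose_eq_zero_of_lt hk])
    rw [chooseSqSum, mul_sum]
    refine sum_congr rfl fun k hk => ?_
    have := mem_range.1 hk
    simp only [M]
    rw [show n + 2 - (k + s) = t + (m - k) by omega, pow_add, pow_add]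
    ring
  have expand : (2 * n + 3) * (A + B) * chooseSqSum (n + 1) A B
        - (n + 1) * (A - B) ^ 2 * chooseSqSum n A B
      = (2 * n + 3) * (A ^ 1 * B ^ 0 * chooseSqSum (n + 1) A B
            + A ^ 0 * B ^ 1 * chooseSqSum (n + 1) A B)
          - (n + 1) * (A ^ 2 * B ^ 0 * chooseSqSum n A B - 2 * (A ^ 1 * B ^ 1 * chooseSqSum n A B)
            + A ^ 0 * B ^ 2 * chooseSqSum n A B) := by ring
  rw [expand, show chooseSqSum (n + 2) A B = A ^ 0 * B ^ 0 * chooseSqSum (n + 2) A B by ring,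
    shift _ 0 0 rfl, shift _ 1 0 rfl, shift _ 0 1 rfl, shift _ 2 0 rfl, shift _ 1 1 rfl,
    shift _ 0 2 rfl]
  simp only [mul_sum, ← sum_add_distrib, ← sum_sub_distrib]
  refine sum_congr rfl fun j _ => ?_
  rcases j with _ | _ | k
  · simp
    ring
  · simp
    ring
  · have hk := congrArg (Nat.cast : ℕ → R) (choose_sq_recurrence n k)
    push_cast at hk
    simp only [Nat.le_add_left, if_true, show k + 1 + 1 - 2 = k by omega, Nat.add_sub_cancel,
      Nat.sub_zero]
    linear_combination M (k + 2) * hk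

end ChooseSq

section CentralBinom

variable {R : Type*} [CommRing R]

def centralBinomSum (n : ℕ) (W Z : R) : R :=
  ∑ p ∈ antidiagonal n, (centralBinom p.1 * W ^ p.1) * (centralBinom p.2 * Z ^ p.2)

theorem succ_mul_centralBinom_mul_pow_succ (i : ℕ) (W : R) :
    (i + 1 : R) * (centralBinom (i + 1) * W ^ (i + 1)) =
      2 * (2 * i + 1) * W * (centralBinom i * W ^ i) := by
  have h := congrArg (Nat.cast : ℕ → R) (succ_mul_centralBinom_succ i)
  push_cast at h
  linear_combination W ^ (i + 1) * h

theorem centralBinomSum_add_two (n : ℕ) (W Z : R) :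
    (n + 2) * centralBinomSum (n + 2) W Z =
      2 * (2 * n + 3) * (W + Z) * centralBinomSum (n + 1) W Z
        - 16 * (n + 1) * W * Z * centralBinomSum n W Z := by
  set a : ℕ → R := fun i => centralBinom i * W ^ i
  set b : ℕ → R := fun j => centralBinom j * Z ^ j
  -- `E m` and `F m` are the images of `centralBinomSum m W Z` under `W ∂_W` and `Z ∂_Z`.
  set E : ℕ → R := fun m => ∑ p ∈ antidiagonal m, (p.1 : R) * (a p.1 * b p.2)
  set F : ℕ → R := fun m => ∑ p ∈ antidiagonal m, (p.2 : R) * (a p.1 * b p.2)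
  have hEF (m : ℕ) : E m + F m = m * centralBinomSum m W Z := by
    simp only [E, F, centralBinomSum, mul_sum, ← sum_add_distrib]
    refine sum_congr rfl fun p hp => ?_
    rw [← mem_antidiagonal.1 hp]
    push_cast
    ring
  have hE (m : ℕ) : E (m + 1) = W * (4 * E m + 2 * centralBinomSum m W Z) := by
    simp only [E, centralBinomSum, Nat.sum_antidiagonal_succ, mul_sum, ← sum_add_distrib]
    simp only [Nat.cast_zero, zero_mul, zero_add, Nat.cast_succ, a]
    refine sum_congr rfl fun p _ => ?_
    linear_combination b p.2 * succ_mul_centralBinom_mul_pow_succ p.1 W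
  have hF (m : ℕ) : F (m + 1) = Z * (4 * F m + 2 * centralBinomSum m W Z) := by
    simp only [F, centralBinomSum, Nat.sum_antidiagonal_succ', mul_sum, ← sum_add_distrib]
    simp only [Nat.cast_zero, zero_mul, zero_add, Nat.cast_succ, b]
    refine sum_congr rfl fun p _ => ?_
    linear_combination a p.1 * succ_mul_centralBinom_mul_pow_succ p.2 Z
  linear_combination (norm := (push_cast; ring)) -hEF (n + 2) + hE (n + 1) + hF (n + 1)
    + 4 * (W + Z) * hEF (n + 1) - 4 * Z * hE n - 4 * W * hF n - 16 * W * Z * hEF n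

end CentralBinom

theorem four_pow_mul_chooseSqSum {R : Type*} [CommRing R] [IsDomain R] [CharZero R]
    (n : ℕ) (a b : R) :
    4 ^ n * chooseSqSum n (a ^ 2) (b ^ 2) = centralBinomSum n ((a - b) ^ 2) ((a + b) ^ 2) := by
  induction n using Nat.twoStepInduction with
  | zero => simp [chooseSqSum, centralBinomSum]
  | one =>
    simp [chooseSqSum, centralBinomSum, sum_range_succ, Nat.sum_antidiagonal_succ,
      centralBinom_eq_two_mul_choose]
    ring
  | more n ih₀ ih₁ =>
    refine mul_left_cancel₀ (show (n + 2 : R) ≠ 0 by exact_mod_cast (n + 1).succ_ne_zero) ?_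
    linear_combination 4 ^ (n + 2) * chooseSqSum_add_two n (a ^ 2) (b ^ 2)
      + 4 * (2 * n + 3) * (a ^ 2 + b ^ 2) * ih₁ - 16 * (n + 1) * (a ^ 2 - b ^ 2) ^ 2 * ih₀
      - centralBinomSum_add_two n ((a - b) ^ 2) ((a + b) ^ 2)

theorem stmt_10_general (n : ℕ) (x : ℝ) :
    (∑ k ∈ Finset.range (n + 1), (n.choose k : ℝ) ^ 2 * x ^ (2 * k) * (1 - x) ^ (2 * (n - k))) =
      ((4 : ℝ) ^ n)⁻¹ * ((2 * n).choose n : ℝ) *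
        ∑ k ∈ Finset.range (n + 1),
          (4 : ℝ) ^ k * (n.choose k : ℝ) ^ 2 * (((2 * n).choose (2 * k) : ℝ))⁻¹ *
            (x - 1 / 2) ^ (2 * k) := by
  have hL : ∑ k ∈ range (n + 1), (n.choose k : ℝ) ^ 2 * x ^ (2 * k) * (1 - x) ^ (2 * (n - k)) =
      chooseSqSum n (x ^ 2) ((1 - x) ^ 2) :=
    sum_congr rfl fun k _ => by rw [pow_mul, pow_mul, mul_assoc]
  have hR : ((2 * n).choose n : ℝ) * ∑ k ∈ range (n + 1),
      (4 : ℝ) ^ k * (n.choose k : ℝ) ^ 2 * (((2 * n).choose (2 * k) : ℝ))⁻¹ * (x - 1 / 2) ^ (2 * k) =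
      centralBinomSum n ((x - (1 - x)) ^ 2) ((x + (1 - x)) ^ 2) := by
    rw [centralBinomSum, Nat.sum_antidiagonal_eq_sum_range_succ (fun i j =>
      (centralBinom i * ((x - (1 - x)) ^ 2) ^ i : ℝ) * (centralBinom j * ((x + (1 - x)) ^ 2) ^ j)),
      mul_sum]
    refine sum_congr rfl fun k hk => ?_
    have hkn : k ≤ n := Nat.lt_succ_iff.1 (mem_range.1 hk)
    have hne : ((2 * n).choose (2 * k) : ℝ) ≠ 0 := by
      exact_mod_cast (Nat.choose_pos (by omega)).ne'
    have hC : (centralBinom k * centralBinom (n - k) : ℝ) =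
        (2 * n).choose n * n.choose k ^ 2 * ((2 * n).choose (2 * k) : ℝ)⁻¹ := by
      rw [eq_mul_inv_iff_mul_eq₀ hne]
      norm_cast
      rw [centralBinom_mul_choose_sq hkn]
      ring
    rw [show (x - (1 - x)) ^ 2 = 4 * (x - 1 / 2) ^ 2 by ring, add_sub_cancel, one_pow, one_pow,
      mul_pow, pow_mul]
    linear_combination (-(4 ^ k * ((x - 1 / 2) ^ 2) ^ k)) * hC
  rw [hL, mul_assoc, hR, ← four_pow_mul_chooseSqSum, inv_mul_cancel_left₀ (by positivity)]

/-- For `n ≥ 1` and all real `x`,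
`F_n(x) = 4^{-n} C(2n,n) ∑ₖ 4ᵏ C(n,k)² C(2n,2k)⁻¹ (x-1/2)^{2k}`. -/
theorem stmt_10 (n : ℕ) (hn : 1 ≤ n) (x : ℝ) :
    (∑ k ∈ Finset.range (n + 1), (n.choose k : ℝ) ^ 2 * x ^ (2 * k) * (1 - x) ^ (2 * (n - k))) =
      ((4 : ℝ) ^ n)⁻¹ * ((2 * n).choose n : ℝ) *
        ∑ k ∈ Finset.range (n + 1),
          (4 : ℝ) ^ k * (n.choose k : ℝ) ^ 2 * (((2 * n).choose (2 * k) : ℝ))⁻¹ *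
            (x - 1 / 2) ^ (2 * k) :=
  stmt_10_general n x
end

section
/- Let $c<0$ be real and $l\in\mathbb{N}$, $l\ge1$, and set $n=-cl$. Define $S_{n,c}(x)=\sum_{k=0}^{l}\binom{l}{k}^2 (-cx)^{2k}(1+cx)^{2(l-k)}$ for $x\in[0,-1/c]$. Then $S_{n,c}$ is a convex function on $[0,-1/c]$. -/
/-!
With `t = -c x`, the sum is `S(t) = ∑ₖ ‖aₖ‖²` for the coefficients `aₖ = C(l,k) tᵏ (1-t)^(l-k)` of
the polynomial `(t u + 1 - t)ˡ`. Parseval's identity over the `(l+1)`-th roots of unity `ζʲ` gives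
`S(t) = (l+1)⁻¹ ∑ⱼ ‖t ζʲ + 1 - t‖^(2l)`, an average of powers of norms of functions affine in `t`.
So `S` is convex on `ℝ`, hence so is `x ↦ S(-c x)`.
-/

open Finset

theorem ConvexOn.finset_sum {𝕜 E β ι : Type*} [Semiring 𝕜] [PartialOrder 𝕜] [AddCommMonoid E]
    [AddCommMonoid β] [PartialOrder β] [IsOrderedAddMonoid β] [SMul 𝕜 E] [Module 𝕜 β]
    {s : Set E} (hs : Convex 𝕜 s) (t : Finset ι) {f : ι → E → β}
    (hf : ∀ i ∈ t, ConvexOn 𝕜 s (f i)) : ConvexOn 𝕜 s (fun x => ∑ i ∈ t, f i x) := by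
  classical
  induction t using Finset.induction_on with
  | empty => simpa only [sum_empty] using convexOn_const (0 : β) hs
  | insert i t hit ih =>
    simp only [sum_insert hit]
    exact (hf i (mem_insert_self i t)).add (ih fun j hj => hf j (mem_insert_of_mem hj))

theorem convexOn_norm_smul_add_pow {E : Type*} [SeminormedAddCommGroup E] [NormedSpace ℝ E]
    (a b : E) (p : ℕ) : ConvexOn ℝ Set.univ (fun t : ℝ => ‖t • a + b‖ ^ p) := by
  have hnorm : ConvexOn ℝ Set.univ (fun t : ℝ => ‖t • a + b‖) := by
    simpa [Function.comp_def, AffineMap.lineMap_apply] using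
      (convexOn_norm convex_univ).comp_affineMap (AffineMap.lineMap b (a + b) : ℝ →ᵃ[ℝ] E)
  exact hnorm.pow (fun _ _ => norm_nonneg _) p

namespace IsPrimitiveRoot

theorem sum_pow_mul_inv_pow_pow {K : Type*} [Field K] {N : ℕ} {ζ : K}
    (hζ : IsPrimitiveRoot ζ N) {k m : ℕ} (hk : k < N) (hm : m < N) :
    ∑ j ∈ range N, (ζ ^ k * ζ⁻¹ ^ m) ^ j = if k = m then (N : K) else 0 := by
  have hζ₀ : ζ ≠ 0 := hζ.ne_zero (by omega)
  split_ifs with hkm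
  · subst hkm
    simp [inv_pow, mul_inv_cancel₀ (pow_ne_zero k hζ₀)]
  · have hq₁ : ζ ^ k * ζ⁻¹ ^ m ≠ 1 := by
      rw [inv_pow, ← div_eq_mul_inv, Ne, div_eq_one_iff_eq (pow_ne_zero _ hζ₀)]
      exact fun h => hkm (hζ.pow_inj hk hm h)
    have hqN : (ζ ^ k * ζ⁻¹ ^ m) ^ N = 1 := by
      calc (ζ ^ k * ζ⁻¹ ^ m) ^ N = (ζ ^ N) ^ k * (ζ ^ N)⁻¹ ^ m := by ring
        _ = 1 := by simp [hζ.pow_eq_one]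
    rw [geom_sum_eq hq₁, hqN, sub_self, zero_div]

open ComplexConjugate in
theorem sum_norm_sum_mul_pow_sq {N : ℕ} {ζ : ℂ} (hζ : IsPrimitiveRoot ζ N) (a : ℕ → ℂ) :
    ∑ j ∈ range N, ‖∑ k ∈ range N, a k * (ζ ^ j) ^ k‖ ^ 2 = N * ∑ k ∈ range N, ‖a k‖ ^ 2 := by
  rcases N.eq_zero_or_pos with rfl | hN
  · simp
  have hconj : conj ζ = ζ⁻¹ := (Complex.inv_eq_conj (hζ.norm'_eq_one hN.ne')).symm
  apply Complex.ofReal_injective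
  push_cast
  simp_rw [← Complex.mul_conj', map_sum, map_mul, map_pow, hconj, sum_mul_sum, mul_sum]
  calc ∑ j ∈ range N, ∑ k ∈ range N, ∑ m ∈ range N,
        a k * (ζ ^ j) ^ k * (conj (a m) * (ζ⁻¹ ^ j) ^ m)
      = ∑ k ∈ range N, ∑ m ∈ range N,
          a k * conj (a m) * ∑ j ∈ range N, (ζ ^ k * ζ⁻¹ ^ m) ^ j := by
        rw [sum_comm]
        refine sum_congr rfl fun k _ => ?_
        rw [sum_comm]
        refine sum_congr rfl fun m _ => ?_
        rw [mul_sum]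
        exact sum_congr rfl fun j _ => by ring
    _ = ∑ k ∈ range N, (N : ℂ) * (a k * conj (a k)) := by
        refine sum_congr rfl fun k hk => ?_
        rw [sum_congr rfl fun m hm => by
          rw [hζ.sum_pow_mul_inv_pow_pow (mem_range.1 hk) (mem_range.1 hm)]]
        simp [hk, mul_comm]

theorem sum_choose_sq_mul_pow_eq {l : ℕ} {ζ : ℂ} (hζ : IsPrimitiveRoot ζ (l + 1)) (t : ℝ) :
    ∑ k ∈ range (l + 1), (l.choose k : ℝ) ^ 2 * t ^ (2 * k) * (1 - t) ^ (2 * (l - k)) =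
      ((l + 1 : ℕ) : ℝ)⁻¹ * ∑ j ∈ range (l + 1), ‖(t : ℂ) * ζ ^ j + (1 - t)‖ ^ (2 * l) := by
  have hpoly (u : ℂ) : ((t : ℂ) * u + (1 - t)) ^ l =
      ∑ k ∈ range (l + 1), ((l.choose k * t ^ k * (1 - t) ^ (l - k) : ℝ) : ℂ) * u ^ k := by
    rw [add_pow]
    refine sum_congr rfl fun k _ => ?_
    push_cast
    ring
  have hparseval := hζ.sum_norm_sum_mul_pow_sq
    fun k => ((l.choose k * t ^ k * (1 - t) ^ (l - k) : ℝ) : ℂ)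
  simp_rw [← hpoly, norm_pow, Complex.norm_real, Real.norm_eq_abs, sq_abs, ← pow_mul',
    mul_pow, ← pow_mul'] at hparseval
  rw [hparseval, ← mul_assoc, inv_mul_cancel₀ (by positivity), one_mul]

end IsPrimitiveRoot

theorem convexOn_sum_choose_sq_mul_pow (l : ℕ) :
    ConvexOn ℝ Set.univ fun t : ℝ =>
      ∑ k ∈ range (l + 1), (l.choose k : ℝ) ^ 2 * t ^ (2 * k) * (1 - t) ^ (2 * (l - k)) := by
  obtain ⟨ζ, hζ⟩ : ∃ ζ : ℂ, IsPrimitiveRoot ζ (l + 1) :=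
    ⟨_, Complex.isPrimitiveRoot_exp (l + 1) l.succ_ne_zero⟩
  have haffine (t : ℝ) (j : ℕ) : (t : ℂ) * ζ ^ j + (1 - t) = t • (ζ ^ j - 1) + 1 := by
    rw [Complex.real_smul]
    ring
  simp_rw [hζ.sum_choose_sq_mul_pow_eq, haffine]
  exact (ConvexOn.finset_sum convex_univ _ fun j _ => convexOn_norm_smul_add_pow _ _ _).smul
    (by positivity)

theorem stmt_11_general (c : ℝ) (l : ℕ) :
    ConvexOn ℝ (Set.Icc (0:ℝ) (-1/c))
      (fun x : ℝ => ∑ k ∈ Finset.range (l + 1),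
        (l.choose k : ℝ) ^ 2 * (-c * x) ^ (2 * k) * (1 + c * x) ^ (2 * (l - k))) := by
  have h := (convexOn_sum_choose_sq_mul_pow l).comp_linearMap (LinearMap.mul ℝ ℝ (-c))
  simp only [Set.preimage_univ, Function.comp_def, LinearMap.mul_apply', neg_mul,
    sub_neg_eq_add] at h
  simpa only [neg_mul] using h.subset (Set.subset_univ _) (convex_Icc _ _)

/-- For `c < 0`, `n = -cl` with `l ≥ 1`, the sum of squared fundamental functions
`S_{n,c}(x) = ∑ₖ C(l,k)² (-cx)^{2k} (1+cx)^{2(l-k)}` is convex on `[0,-1/c]`. -/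
theorem stmt_11 (c : ℝ) (hc : c < 0) (l : ℕ) (hl : 1 ≤ l) (n : ℝ) (hn : n = -c * l) :
    ConvexOn ℝ (Set.Icc (0:ℝ) (-1/c))
      (fun x : ℝ => ∑ k ∈ Finset.range (l + 1),
        (l.choose k : ℝ) ^ 2 * (-c * x) ^ (2 * k) * (1 + c * x) ^ (2 * (l - k))) :=
  stmt_11_general c l
end

section
/- Let $n\in\mathbb{N}$, $n\ge1$, and define $F_n(x)=\sum_{k=0}^{n}\binom{n}{k}^2 x^{2k}(1-x)^{2(n-k)}$. Then for every $x\in[0,1]$, $F_n(x)=\frac{1}{\pi}\int_0^1\big(t+(1-t)(1-2x)^2\big)^{n}\,\frac{dt}{\sqrt{t(1-t)}}$. -/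
/-!
Substituting `t = (1 + cos θ) / 2` turns `dt / √(t (1 - t))` on `(0, 1)` into `dθ` on `(0, π)`
and the integrand into `|x e^{iθ} + (1 - x)|^{2n}`. By the binomial theorem the coefficients of
`(x e^{iθ} + (1 - x))^n` are the Bernstein values `C(n, k) x^k (1 - x)^(n - k)`, and since they are
real, orthogonality of the `cos (m θ)` on `(0, π)` makes the integral `π` times the sum of their
squares.
-/

open Real Set Finset MeasureTheory
open scoped ComplexConjugate

theorem integral_cos_natCast_sub_mul (k l : ℕ) :
    ∫ θ in (0:ℝ)..π, cos (((k : ℝ) - l) * θ) = if k = l then π else 0 := by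
  split_ifs with h
  · simp [h]
  · have hkl : ((k : ℝ) - l) ≠ 0 := sub_ne_zero.mpr (by exact_mod_cast h)
    have hsin : sin (((k : ℝ) - l) * π) = 0 := by
      simpa using sin_int_mul_pi ((k : ℤ) - l)
    rw [intervalIntegral.integral_comp_mul_left (fun y => cos y) hkl, integral_cos, hsin]
    simp

theorem normSq_sum_mul_exp (s : Finset ℕ) (a : ℕ → ℝ) (θ : ℝ) :
    Complex.normSq (∑ k ∈ s, (a k : ℂ) * Complex.exp (k * θ * Complex.I)) =
      ∑ k ∈ s, ∑ l ∈ s, a k * a l * cos (((k : ℝ) - l) * θ) := by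
  rw [← Complex.ofReal_re (Complex.normSq _), ← Complex.mul_conj, map_sum, sum_mul_sum,
    Complex.re_sum]
  refine sum_congr rfl fun k _ => ?_
  rw [Complex.re_sum]
  refine sum_congr rfl fun l _ => ?_
  have hexp : Complex.exp (k * θ * Complex.I) * conj (Complex.exp (l * θ * Complex.I)) =
      Complex.exp ((((k : ℝ) - l) * θ : ℝ) * Complex.I) := by
    rw [← Complex.exp_conj, ← Complex.exp_add]
    congr 1
    simp only [map_mul, Complex.conj_ofReal, Complex.conj_natCast, Complex.conj_I]
    push_cast
    ring
  rw [map_mul, Complex.conj_ofReal, mul_mul_mul_comm, hexp, ← Complex.ofReal_mul,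
    Complex.re_ofReal_mul, Complex.exp_ofReal_mul_I_re]

theorem integral_normSq_sum_mul_exp (s : Finset ℕ) (a : ℕ → ℝ) :
    ∫ θ in (0:ℝ)..π, Complex.normSq (∑ k ∈ s, (a k : ℂ) * Complex.exp (k * θ * Complex.I)) =
      π * ∑ k ∈ s, a k ^ 2 := by
  have hcont : ∀ k l : ℕ, Continuous fun θ => a k * a l * cos (((k : ℝ) - l) * θ) := by
    intro k l; fun_prop
  simp_rw [normSq_sum_mul_exp]
  rw [intervalIntegral.integral_finsetSum fun k _ =>
    (continuous_finsetSum s fun l _ => hcont k l).intervalIntegrable 0 π, mul_sum]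
  refine sum_congr rfl fun k hk => ?_
  rw [intervalIntegral.integral_finsetSum fun l _ => (hcont k l).intervalIntegrable 0 π]
  simp_rw [intervalIntegral.integral_const_mul, integral_cos_natCast_sub_mul, mul_ite, mul_zero,
    sum_ite_eq s k, if_pos hk]
  ring

theorem mul_exp_add_one_sub_pow (n : ℕ) (x θ : ℝ) :
    ((x : ℂ) * Complex.exp (θ * Complex.I) + (1 - x)) ^ n =
      ∑ k ∈ range (n + 1),
        ((n.choose k * x ^ k * (1 - x) ^ (n - k) : ℝ) : ℂ) * Complex.exp (k * θ * Complex.I) := by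
  rw [add_pow]
  refine sum_congr rfl fun k _ => ?_
  rw [mul_pow, ← Complex.exp_nat_mul]
  push_cast
  ring_nf

theorem normSq_mul_exp_add_one_sub (x θ : ℝ) :
    Complex.normSq ((x : ℂ) * Complex.exp (θ * Complex.I) + (1 - x)) =
      (1 + cos θ) / 2 + (1 - (1 + cos θ) / 2) * (1 - 2 * x) ^ 2 := by
  have hre : ((x : ℂ) * Complex.exp (θ * Complex.I) + (1 - x)).re = x * cos θ + (1 - x) := by
    simp [Complex.exp_ofReal_mul_I_re]
  have him : ((x : ℂ) * Complex.exp (θ * Complex.I) + (1 - x)).im = x * sin θ := by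
    simp [Complex.exp_ofReal_mul_I_im]
  rw [Complex.normSq_apply, hre, him]
  linear_combination x ^ 2 * sin_sq_add_cos_sq θ

theorem image_one_add_cos_div_two_Ioo :
    (fun θ => (1 + cos θ) / 2) '' Set.Ioo 0 π = Set.Ioo 0 1 := by
  ext t
  constructor
  · rintro ⟨θ, hθ, rfl⟩
    have h1 : -1 < cos θ := by
      have := cos_lt_cos_of_nonneg_of_le_pi hθ.1.le le_rfl hθ.2
      rwa [cos_pi] at this
    have h2 : cos θ < 1 := by
      simpa using cos_lt_cos_of_nonneg_of_le_pi le_rfl hθ.2.le hθ.1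
    constructor <;> linarith
  · rintro ⟨h0, h1⟩
    refine ⟨arccos (2 * t - 1), ⟨arccos_pos.mpr (by linarith), arccos_lt_pi.mpr (by linarith)⟩, ?_⟩
    simp only
    rw [cos_arccos (by linarith) (by linarith)]
    ring

theorem integral_div_sqrt_mul_one_sub (g : ℝ → ℝ) :
    ∫ t in (0:ℝ)..1, g t / √(t * (1 - t)) = ∫ θ in (0:ℝ)..π, g ((1 + cos θ) / 2) := by
  have hderiv : ∀ θ ∈ Set.Ioo 0 π,
      HasDerivWithinAt (fun θ => (1 + cos θ) / 2) (-sin θ / 2) (Set.Ioo 0 π) θ := fun θ _ =>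
    (((hasDerivAt_cos θ).const_add 1).div_const 2).hasDerivWithinAt
  have hinj : InjOn (fun θ => (1 + cos θ) / 2) (Set.Ioo 0 π) := fun a ha b hb hab =>
    injOn_cos (Ioo_subset_Icc_self ha) (Ioo_subset_Icc_self hb) (by simpa using hab)
  rw [intervalIntegral.integral_of_le zero_le_one, integral_Ioc_eq_integral_Ioo,
    intervalIntegral.integral_of_le pi_pos.le, integral_Ioc_eq_integral_Ioo,
    ← image_one_add_cos_div_two_Ioo,
    integral_image_eq_integral_abs_deriv_smul measurableSet_Ioo hderiv hinj]
  refine setIntegral_congr_fun measurableSet_Ioo fun θ hθ => ?_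
  have hsin : 0 < sin θ := sin_pos_of_pos_of_lt_pi hθ.1 hθ.2
  have hsqrt : √((1 + cos θ) / 2 * (1 - (1 + cos θ) / 2)) = sin θ / 2 := by
    rw [← sqrt_sq (by positivity : 0 ≤ sin θ / 2)]
    congr 1
    linear_combination (-1 / 4 : ℝ) * sin_sq_add_cos_sq θ
  rw [hsqrt, smul_eq_mul, abs_of_neg (by linarith)]
  field_simp

theorem stmt_12_general (n : ℕ) (x : ℝ) :
    (∑ k ∈ Finset.range (n + 1), (n.choose k : ℝ) ^ 2 * x ^ (2 * k) * (1 - x) ^ (2 * (n - k))) =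
      (1 / Real.pi) * ∫ t in (0:ℝ)..1,
        (t + (1 - t) * (1 - 2 * x) ^ 2) ^ n / Real.sqrt (t * (1 - t)) := by
  rw [integral_div_sqrt_mul_one_sub fun t => (t + (1 - t) * (1 - 2 * x) ^ 2) ^ n]
  simp_rw [← normSq_mul_exp_add_one_sub, ← map_pow, mul_exp_add_one_sub_pow,
    integral_normSq_sum_mul_exp]
  rw [one_div, inv_mul_cancel_left₀ pi_ne_zero]
  refine sum_congr rfl fun k _ => ?_
  ring

/-- For `n ≥ 1` and `x ∈ [0,1]`,
`F_n(x) = (1/π) ∫_0^1 (t+(1-t)(1-2x)²)ⁿ dt/√(t(1-t))`. -/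
theorem stmt_12 (n : ℕ) (hn : 1 ≤ n) (x : ℝ) (hx : x ∈ Set.Icc (0:ℝ) 1) :
    (∑ k ∈ Finset.range (n + 1), (n.choose k : ℝ) ^ 2 * x ^ (2 * k) * (1 - x) ^ (2 * (n - k))) =
      (1 / Real.pi) * ∫ t in (0:ℝ)..1,
        (t + (1 - t) * (1 - 2 * x) ^ 2) ^ n / Real.sqrt (t * (1 - t)) :=
  stmt_12_general n x
end

section
/- Let $n\in\mathbb{N}$, $n\ge1$, and define $F_m(x)=\sum_{k=0}^{m}\binom{m}{k}^2 x^{2k}(1-x)^{2(m-k)}$ for $m\in\mathbb{N}$. Then for every real $x$, $F_{n+1}'(x)-(1-2x)^2F_{n-1}'(x)=2(1-2x)\big((2n-1)F_{n-1}(x)-(2n+1)F_n(x)\big)$, where $F_m'$ denotes the derivative of the polynomial function $F_m$. -/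
/-!
Put `a = x ^ 2` and `b = (1 - x) ^ 2`. Then `F m x = G m a b` for the symmetric binary form
`G m a b = ∑ C(m, k)² a^k b^(m-k)`, and `F_m'(x) = 2x ∂ₐG m a b - 2(1-x) ∂ₐG m b a`.
Since `b - a = 1 - 2x`, the theorem is `2x` times the recurrence
`(*)  ∂ₐG (m+2) = (b-a)² ∂ₐG m + (2m+1)(b-a) G m + (2m+3) G (m+1)`
minus `2(1-x)` times `(*)` with `a` and `b` swapped; `(*)` holds coefficientwise by Pascal's rule.
-/

open Finset

section

variable {R : Type*} [CommRing R]

def binaryForm (N : ℕ) (c : ℕ → R) (a b : R) : R :=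
  ∑ k ∈ range (N + 1), c k * a ^ k * b ^ (N - k)

theorem binaryForm_succ (N : ℕ) (c : ℕ → R) (a b : R) :
    binaryForm (N + 1) c a b = b * binaryForm N c a b + c (N + 1) * a ^ (N + 1) := by
  rw [binaryForm, sum_range_succ, binaryForm, mul_sum, Nat.sub_self, pow_zero, mul_one]
  congr 1
  refine sum_congr rfl fun k hk => ?_
  rw [show N + 1 - k = N - k + 1 by grind]
  ring

theorem binaryForm_succ' (N : ℕ) (c : ℕ → R) (a b : R) :
    binaryForm (N + 1) c a b = c 0 * b ^ (N + 1) + a * binaryForm N (fun k => c (k + 1)) a b := by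
  rw [binaryForm, binaryForm, sum_range_succ', mul_sum, add_comm]
  congr 1
  · simp
  · refine sum_congr rfl fun k _ => ?_
    rw [Nat.add_sub_add_right]
    ring

theorem mul_binaryForm_right (N : ℕ) (c : ℕ → R) (a b : R) :
    b * binaryForm N c a b =
      c 0 * b ^ (N + 1) + a * binaryForm N (fun k => c (k + 1)) a b - c (N + 1) * a ^ (N + 1) := by
  rw [← binaryForm_succ', binaryForm_succ, add_sub_cancel_right]

theorem binaryForm_add (N : ℕ) (c d : ℕ → R) (a b : R) :
    binaryForm N (fun k => c k + d k) a b = binaryForm N c a b + binaryForm N d a b := by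
  simp only [binaryForm, add_mul, sum_add_distrib]

theorem binaryForm_sub (N : ℕ) (c d : ℕ → R) (a b : R) :
    binaryForm N (fun k => c k - d k) a b = binaryForm N c a b - binaryForm N d a b := by
  simp only [binaryForm, sub_mul, sum_sub_distrib]

theorem binaryForm_const_mul (N : ℕ) (r : R) (c : ℕ → R) (a b : R) :
    binaryForm N (fun k => r * c k) a b = r * binaryForm N c a b := by
  simp only [binaryForm, mul_sum, mul_assoc]

def chooseSqForm (m : ℕ) (a b : R) : R :=
  binaryForm m (fun k => (m.choose k : R) ^ 2) a b

/-- The truncated exponent `k - 1` only occurs in the vanishing term `k = 0`. -/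
def chooseSqFormDeriv (m : ℕ) (a b : R) : R :=
  ∑ k ∈ range (m + 1), (k : R) * (m.choose k : R) ^ 2 * a ^ (k - 1) * b ^ (m - k)

theorem chooseSqForm_comm (m : ℕ) (a b : R) : chooseSqForm m a b = chooseSqForm m b a := by
  rw [chooseSqForm, binaryForm, ← sum_range_reflect]
  refine sum_congr rfl fun k hk => ?_
  have hk : k ≤ m := by grind
  rw [Nat.add_sub_cancel, Nat.choose_symm hk, Nat.sub_sub_self hk]
  ring

theorem chooseSqFormDeriv_swap (m : ℕ) (a b : R) :
    chooseSqFormDeriv m b a =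
      ∑ k ∈ range (m + 1),
        ((m - k : ℕ) : R) * (m.choose k : R) ^ 2 * a ^ k * b ^ (m - k - 1) := by
  rw [chooseSqFormDeriv, ← sum_range_reflect]
  refine sum_congr rfl fun k hk => ?_
  have hk : k ≤ m := by grind
  rw [Nat.add_sub_cancel, Nat.choose_symm hk, Nat.sub_sub_self hk]
  ring

theorem mul_chooseSqFormDeriv_left (m : ℕ) (a b : R) :
    a * chooseSqFormDeriv m a b = binaryForm m (fun k => (k : R) * (m.choose k : R) ^ 2) a b := by
  rw [chooseSqFormDeriv, binaryForm, mul_sum]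
  refine sum_congr rfl fun k _ => ?_
  rcases k with _ | k
  · simp
  · rw [Nat.add_sub_cancel, pow_succ]
    ring

theorem chooseSqFormDeriv_succ (N : ℕ) (a b : R) :
    chooseSqFormDeriv (N + 1) a b =
      binaryForm N (fun k => ((k : R) + 1) * ((N + 1).choose (k + 1) : R) ^ 2) a b := by
  rw [chooseSqFormDeriv, sum_range_succ', binaryForm]
  simp only [Nat.cast_zero, zero_mul, add_zero, Nat.add_sub_cancel, Nat.add_sub_add_right,
    Nat.cast_succ]

theorem mul_chooseSqFormDeriv_right (m : ℕ) (a b : R) :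
    b * chooseSqFormDeriv m a b =
      binaryForm m (fun k => ((k : R) + 1) * (m.choose (k + 1) : R) ^ 2) a b := by
  rcases m with _ | N
  · simp [chooseSqFormDeriv, binaryForm]
  · rw [chooseSqFormDeriv_succ, binaryForm_succ, Nat.choose_succ_self]
    simp

theorem cast_choose_succ_mul (m j : ℕ) :
    ((j : R) + 1) * (m.choose (j + 1) : R) = ((m : R) - j) * (m.choose j : R) := by
  rcases le_or_gt j m with h | h
  · have := congrArg (Nat.cast : ℕ → R) (Nat.choose_succ_right_eq m j)
    push_cast [Nat.cast_sub h] at this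
    linear_combination this
  · rw [Nat.choose_eq_zero_of_lt h, Nat.choose_eq_zero_of_lt (by omega)]
    simp

theorem cast_choose_add_two_sq (m i : ℕ) :
    ((i : R) + 2) * ((m + 2).choose (i + 2) : R) ^ 2 =
      ((i : R) + 2) * (m.choose (i + 2) : R) ^ 2
        - 2 * (((i : R) + 1) * (m.choose (i + 1) : R) ^ 2)
        + (i : R) * (m.choose i : R) ^ 2
        + (2 * m + 1) * ((m.choose (i + 1) : R) ^ 2 - (m.choose i : R) ^ 2)
        + (2 * m + 3) * ((m + 1).choose (i + 1) : R) ^ 2 := by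
  have pascal₁ : ((m + 1).choose (i + 1) : R) = m.choose i + m.choose (i + 1) := by
    rw [Nat.choose_succ_succ]; push_cast; ring
  have pascal₂ :
      ((m + 2).choose (i + 2) : R) = m.choose i + 2 * m.choose (i + 1) + m.choose (i + 2) := by
    rw [Nat.choose_succ_succ (m + 1), Nat.choose_succ_succ m, Nat.choose_succ_succ m (i + 1)]
    push_cast; ring
  have h₁ := cast_choose_succ_mul (R := R) m i
  have h₂ := cast_choose_succ_mul (R := R) m (i + 1)
  rw [pascal₁, pascal₂]
  push_cast at h₂
  linear_combination (2 * ((m.choose i : R) + 2 * m.choose (i + 1))) * h₂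
    + (2 * (m.choose (i + 1) : R)) * h₁

theorem chooseSqFormDeriv_add_two (m : ℕ) (a b : R) :
    chooseSqFormDeriv (m + 2) a b = (b - a) ^ 2 * chooseSqFormDeriv m a b
      + (2 * m + 1) * (b - a) * chooseSqForm m a b + (2 * m + 3) * chooseSqForm (m + 1) a b := by
  -- Each term becomes `t * b ^ (m + 1) + a * binaryForm m d`; the `d` match by
  -- `cast_choose_add_two_sq`.
  have hL : chooseSqFormDeriv (m + 2) a b = (m + 2) ^ 2 * b ^ (m + 1)
      + a * binaryForm m (fun i => ((i : R) + 2) * ((m + 2).choose (i + 2) : R) ^ 2) a b := by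
    rw [chooseSqFormDeriv_succ, binaryForm_succ', zero_add, Nat.choose_one_right]
    push_cast
    ring_nf
  have hbbE : b * (b * chooseSqFormDeriv m a b) = m ^ 2 * b ^ (m + 1)
      + a * binaryForm m (fun i => ((i : R) + 2) * (m.choose (i + 2) : R) ^ 2) a b := by
    rw [mul_chooseSqFormDeriv_right, mul_binaryForm_right, zero_add, Nat.choose_one_right,
      Nat.choose_eq_zero_of_lt (by omega : m < m + 1 + 1)]
    push_cast
    ring_nf
  have hbG : b * chooseSqForm m a b = b ^ (m + 1)
      + a * binaryForm m (fun i => (m.choose (i + 1) : R) ^ 2) a b := by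
    rw [chooseSqForm, mul_binaryForm_right]
    simp
  have hG₁ : chooseSqForm (m + 1) a b = b ^ (m + 1)
      + a * binaryForm m (fun i => ((m + 1).choose (i + 1) : R) ^ 2) a b := by
    rw [chooseSqForm, binaryForm_succ']
    simp
  have hcoef : binaryForm m (fun i => ((i : R) + 2) * ((m + 2).choose (i + 2) : R) ^ 2) a b =
      binaryForm m (fun i => ((i : R) + 2) * (m.choose (i + 2) : R) ^ 2) a b
        - 2 * binaryForm m (fun k => ((k : R) + 1) * (m.choose (k + 1) : R) ^ 2) a b
        + binaryForm m (fun k => (k : R) * (m.choose k : R) ^ 2) a b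
        + (2 * m + 1) * (binaryForm m (fun i => (m.choose (i + 1) : R) ^ 2) a b
          - binaryForm m (fun k => (m.choose k : R) ^ 2) a b)
        + (2 * m + 3) * binaryForm m (fun i => ((m + 1).choose (i + 1) : R) ^ 2) a b := by
    simp only [cast_choose_add_two_sq, binaryForm_add, binaryForm_sub, binaryForm_const_mul]
  rw [hL, hG₁]
  unfold chooseSqForm at hbG ⊢
  linear_combination a * hcoef - hbbE + 2 * a * mul_chooseSqFormDeriv_right m a b
    - a * mul_chooseSqFormDeriv_left m a b - (2 * m + 1) * hbG

end

theorem HasDerivAt.chooseSqForm {𝕜 : Type*} [NontriviallyNormedField 𝕜] {u w : 𝕜 → 𝕜}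
    {u' w' x : 𝕜} (m : ℕ) (hu : HasDerivAt u u' x) (hw : HasDerivAt w w' x) :
    HasDerivAt (fun y => chooseSqForm m (u y) (w y))
      (u' * chooseSqFormDeriv m (u x) (w x) + w' * chooseSqFormDeriv m (w x) (u x)) x := by
  rw [chooseSqFormDeriv_swap m (u x), chooseSqFormDeriv, mul_sum, mul_sum, ← sum_add_distrib]
  unfold _root_.chooseSqForm binaryForm
  refine HasDerivAt.fun_sum fun k _ => ?_
  exact (((hu.fun_pow k).const_mul _).fun_mul (hw.fun_pow (m - k))).congr_deriv (by ring)

/-- For `n ≥ 1` and all real `x`,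
`F_{n+1}'(x) - (1-2x)² F_{n-1}'(x) = 2(1-2x)((2n-1)F_{n-1}(x) - (2n+1)F_n(x))`. -/
theorem stmt_14 (n : ℕ) (hn : 1 ≤ n)
    (F : ℕ → ℝ → ℝ)
    (hF : ∀ (m : ℕ) (x : ℝ), F m x = ∑ k ∈ Finset.range (m + 1),
      (m.choose k : ℝ) ^ 2 * x ^ (2 * k) * (1 - x) ^ (2 * (m - k))) (x : ℝ) :
    deriv (F (n + 1)) x - (1 - 2 * x) ^ 2 * deriv (F (n - 1)) x =
      2 * (1 - 2 * x) * ((2 * n - 1) * F (n - 1) x - (2 * n + 1) * F n x) := by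
  obtain ⟨m, rfl⟩ : ∃ m, n = m + 1 := ⟨n - 1, by omega⟩
  have hF_eq (r : ℕ) : F r = fun y => chooseSqForm r (y ^ 2) ((1 - y) ^ 2) := by
    ext y
    simp only [hF, chooseSqForm, binaryForm, pow_mul]
  have hderiv (r : ℕ) : deriv (F r) x = 2 * x * chooseSqFormDeriv r (x ^ 2) ((1 - x) ^ 2)
      - 2 * (1 - x) * chooseSqFormDeriv r ((1 - x) ^ 2) (x ^ 2) := by
    rw [hF_eq]
    refine ((hasDerivAt_pow 2 x).chooseSqForm r
      (((hasDerivAt_id' x).const_sub 1).fun_pow 2)).deriv.trans ?_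
    simp only [Nat.cast_ofNat, Nat.add_one_sub_one, pow_one]
    ring
  have key := chooseSqFormDeriv_add_two m (x ^ 2) ((1 - x) ^ 2)
  have key' := chooseSqFormDeriv_add_two m ((1 - x) ^ 2) (x ^ 2)
  rw [chooseSqForm_comm m, chooseSqForm_comm (m + 1)] at key'
  rw [hderiv, hderiv, hF_eq, hF_eq, Nat.add_sub_cancel]
  push_cast
  linear_combination 2 * x * key - 2 * (1 - x) * key'
end

section
/- Let $n\in\mathbb{N}$, $n\ge1$, and define $F_n(x)=\sum_{k=0}^{n}\binom{n}{k}^2 x^{2k}(1-x)^{2(n-k)}$. Then for every real $x$, $x(1-x)(1-2x)F_n''(x)+\big(1+4(n-1)x(1-x)\big)F_n'(x)+2n(1-2x)F_n(x)=0$. -/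
/-!
Write `b k` for the Bernstein polynomial `C(n,k) X^k (1-X)^(n-k)` and `θ = X (1-X) d/dX`.
Unlike `d/dX`, the derivation `θ` acts on `b k` by multiplication, `θ (b k) = (k - n X) b k`,
and `X (1-X)` times the Heun operator is a second-order expression in `θ`; hence it multiplies
`(b k)^2` by `4 (k^2 (1-X)^2 - (n-k)^2 X^2)`. Because `(n-k) X b k = (k+1) (1-X) b (k+1)`, these
terms telescope to zero. Cancelling `X (1-X)` in the domain `R[X]` gives the polynomial identity, and
`F` is the evaluation of `∑ (b k)^2`.
-/

open Polynomial Finset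

namespace SumSqBernstein

variable {R : Type*} [CommRing R]

noncomputable def theta (p : R[X]) : R[X] := X * (1 - X) * derivative p

theorem theta_mul (p q : R[X]) : theta (p * q) = p * theta q + q * theta p := by
  simp only [theta, derivative_mul]; ring

theorem theta_natCast (m : ℕ) : theta (m : R[X]) = 0 := by
  simp [theta]

theorem theta_X : theta (X : R[X]) = (1 - X) * X := by
  simp [theta, mul_comm]

theorem theta_one_sub_X : theta (1 - X : R[X]) = -X * (1 - X) := by
  simp [theta]

theorem theta_pow_of_theta_eq_mul {p c : R[X]} (h : theta p = c * p) (m : ℕ) :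
    theta (p ^ m) = (m : R[X]) * c * p ^ m := by
  induction m with
  | zero => simp [theta]
  | succ m ih => rw [pow_succ, theta_mul, ih, h]; push_cast; ring

theorem theta_bernsteinPolynomial (n k : ℕ) :
    theta (bernsteinPolynomial R n k) =
      ((k : R[X]) - (n : R[X]) * X) * bernsteinPolynomial R n k := by
  rcases le_or_gt k n with hk | hk
  · simp only [bernsteinPolynomial, theta_mul, theta_natCast,
      theta_pow_of_theta_eq_mul theta_X, theta_pow_of_theta_eq_mul theta_one_sub_X,
      Nat.cast_sub hk]
    ring
  · simp [bernsteinPolynomial.eq_zero_of_lt R hk, theta]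

theorem sub_mul_X_mul_bernsteinPolynomial (n k : ℕ) :
    ((n : R[X]) - (k : R[X])) * X * bernsteinPolynomial R n k =
      ((k : R[X]) + 1) * (1 - X) * bernsteinPolynomial R n (k + 1) := by
  rcases lt_trichotomy k n with hk | rfl | hk
  · have hc : (n.choose (k + 1) : R[X]) * ((k : R[X]) + 1) =
        n.choose k * ((n : R[X]) - (k : R[X])) := by
      simpa [Nat.cast_sub hk.le] using
        congrArg (Nat.cast : ℕ → R[X]) (Nat.choose_succ_right_eq n k)
    obtain ⟨j, rfl⟩ : ∃ j, n = k + 1 + j := ⟨n - (k + 1), by omega⟩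
    simp only [bernsteinPolynomial, show k + 1 + j - k = j + 1 by omega,
      show k + 1 + j - (k + 1) = j by omega]
    linear_combination (-(X ^ (k + 1) * (1 - X) ^ (j + 1))) * hc
  · simp [bernsteinPolynomial.eq_zero_of_lt R (Nat.lt_succ_self k)]
  · simp [bernsteinPolynomial.eq_zero_of_lt R hk,
      bernsteinPolynomial.eq_zero_of_lt R (hk.trans (Nat.lt_succ_self k))]

theorem sum_weighted_sq_bernsteinPolynomial (n : ℕ) :
    ∑ k ∈ range (n + 1), ((k : R[X]) ^ 2 * (1 - X) ^ 2 - ((n : R[X]) - (k : R[X])) ^ 2 * X ^ 2) *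
      bernsteinPolynomial R n k ^ 2 = 0 := by
  set c : ℕ → R[X] := fun k => (k : R[X]) * (1 - X) * bernsteinPolynomial R n k
  have hstep (k : ℕ) : ((k : R[X]) ^ 2 * (1 - X) ^ 2 - ((n : R[X]) - (k : R[X])) ^ 2 * X ^ 2) *
      bernsteinPolynomial R n k ^ 2 = c k ^ 2 - c (k + 1) ^ 2 := by
    have := sub_mul_X_mul_bernsteinPolynomial (R := R) n k
    simp only [c, Nat.cast_add, Nat.cast_one]
    linear_combination (-(((n : R[X]) - (k : R[X])) * X * bernsteinPolynomial R n k) -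
      ((k : R[X]) + 1) * (1 - X) * bernsteinPolynomial R n (k + 1)) * this
  rw [sum_congr rfl fun k _ => hstep k, sum_range_sub']
  simp [c, bernsteinPolynomial.eq_zero_of_lt R (Nat.lt_succ_self n)]

noncomputable def heunOp (n : ℕ) (p : R[X]) : R[X] :=
  X * (1 - X) * (1 - 2 * X) * derivative (derivative p) +
    (1 + 4 * ((n : R[X]) - 1) * X * (1 - X)) * derivative p + 2 * (n : R[X]) * (1 - 2 * X) * p

theorem heunOp_sum {ι : Type*} (n : ℕ) (s : Finset ι) (f : ι → R[X]) :
    heunOp n (∑ i ∈ s, f i) = ∑ i ∈ s, heunOp n (f i) := by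
  simp only [heunOp, derivative_sum, mul_sum, ← sum_add_distrib]

theorem X_mul_one_sub_X_mul_heunOp (n : ℕ) (p : R[X]) :
    X * (1 - X) * heunOp n p = (1 - 2 * X) * theta (theta p) +
      4 * (n : R[X]) * X * (1 - X) * theta p + 2 * (n : R[X]) * (1 - 2 * X) * X * (1 - X) * p := by
  simp only [heunOp, theta, derivative_mul, derivative_sub, derivative_one, derivative_X]
  ring

theorem X_mul_one_sub_X_mul_heunOp_sq_bernsteinPolynomial (n k : ℕ) :
    X * (1 - X) * heunOp n (bernsteinPolynomial R n k ^ 2) =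
      4 * (((k : R[X]) ^ 2 * (1 - X) ^ 2 - ((n : R[X]) - (k : R[X])) ^ 2 * X ^ 2) *
        bernsteinPolynomial R n k ^ 2) := by
  have hθ : theta (bernsteinPolynomial R n k ^ 2) =
      2 * ((k : R[X]) - (n : R[X]) * X) * bernsteinPolynomial R n k ^ 2 := by
    rw [sq, theta_mul, theta_bernsteinPolynomial]; ring
  have hθθ : theta (2 * ((k : R[X]) - (n : R[X]) * X)) = -2 * (n : R[X]) * X * (1 - X) := by
    simp only [theta, derivative_mul, derivative_ofNat, derivative_sub, derivative_natCast,
      derivative_X]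
    ring
  rw [X_mul_one_sub_X_mul_heunOp, hθ, theta_mul, hθ, hθθ]
  ring

theorem heunOp_sum_sq_bernsteinPolynomial [IsDomain R] (n : ℕ) :
    heunOp n (∑ k ∈ range (n + 1), bernsteinPolynomial R n k ^ 2) = 0 := by
  have hX : (X * (1 - X) : R[X]) ≠ 0 := mul_ne_zero X_ne_zero fun h => by
    simpa using congrArg (coeff · 0) h
  refine (mul_eq_zero.mp ?_).resolve_left hX
  rw [heunOp_sum, mul_sum]
  simp only [X_mul_one_sub_X_mul_heunOp_sq_bernsteinPolynomial]
  rw [← mul_sum, sum_weighted_sq_bernsteinPolynomial, mul_zero]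

end SumSqBernstein

theorem stmt_15_general (n : ℕ)
    (F : ℝ → ℝ)
    (hF : ∀ x : ℝ, F x = ∑ k ∈ Finset.range (n + 1),
      (n.choose k : ℝ) ^ 2 * x ^ (2 * k) * (1 - x) ^ (2 * (n - k))) (x : ℝ) :
    x * (1 - x) * (1 - 2 * x) * deriv (deriv F) x +
      (1 + 4 * ((n : ℝ) - 1) * x * (1 - x)) * deriv F x +
      2 * n * (1 - 2 * x) * F x = 0 := by
  set P : ℝ[X] := ∑ k ∈ range (n + 1), bernsteinPolynomial ℝ n k ^ 2
  have hFP : F = fun y => P.eval y := by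
    funext y
    simp only [hF, P, eval_finsetSum, bernsteinPolynomial, eval_pow, eval_mul, eval_natCast,
      eval_sub, eval_one, eval_X]
    exact sum_congr rfl fun k _ => by ring
  have hF' : deriv F = fun y => (derivative P).eval y := by
    rw [hFP]
    exact funext fun y => Polynomial.deriv P
  have hF'' : deriv (deriv F) x = (derivative (derivative P)).eval x := by
    rw [hF']
    exact Polynomial.deriv _
  have hP := congrArg (eval x) (SumSqBernstein.heunOp_sum_sq_bernsteinPolynomial (R := ℝ) n)
  simp only [SumSqBernstein.heunOp, eval_add, eval_mul, eval_sub, eval_one, eval_X, eval_ofNat, eval_natCast,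
    eval_zero] at hP
  rw [hF'', hF', hFP]
  linear_combination hP

/-- For `n ≥ 1` and all real `x`,
`x(1-x)(1-2x)F_n''(x) + (1+4(n-1)x(1-x))F_n'(x) + 2n(1-2x)F_n(x) = 0`. -/
theorem stmt_15 (n : ℕ) (hn : 1 ≤ n)
    (F : ℝ → ℝ)
    (hF : ∀ x : ℝ, F x = ∑ k ∈ Finset.range (n + 1),
      (n.choose k : ℝ) ^ 2 * x ^ (2 * k) * (1 - x) ^ (2 * (n - k))) (x : ℝ) :
    x * (1 - x) * (1 - 2 * x) * deriv (deriv F) x +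
      (1 + 4 * ((n : ℝ) - 1) * x * (1 - x)) * deriv F x +
      2 * n * (1 - 2 * x) * F x = 0 :=
  stmt_15_general n F hF x
end

section
/- Let $n\in\mathbb{N}$, $n\ge2$, and define $F_n(x)=\sum_{k=0}^{n}\binom{n}{k}^2 x^{2k}(1-x)^{2(n-k)}$. Then for every $x\in[0,1]$, $F_n(x)\le\big(1+4(n-1)x(1-x)\big)^{-\frac{n}{2(n-1)}}$. -/
/-!
Write `A n`, `B n`, `C n` for the sums `∑ₖ bₙₖ(x) bₙ,ₖ₊ⱼ(x)`, `j = 0, 1, 2`, of products of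
Bernstein basis values, so that `Fₙ = A n`. Pascal's rule `bₙ₊₁ = (1 - x, x) ∗ bₙ` expresses
`A (n+1)` and `B (n+1)` through `A n`, `B n`, `C n`; the identity
`bₙ₊₁,ₖ₊₁ bₙ₊₁,ₖ₊₂ = (n+1) x(1-x) (bₙ,ₖ₊₁² - bₙₖ bₙ,ₖ₊₂)` gives a second formula for `B (n+1)`;
and `A' (n+1) = 2(n+1)(1-2x)(B n - A n)`. Together they show that
`W = A (n+1) ^ (2n) * (1 + 4n x(1-x)) ^ (n+1)` satisfies `W' = -c (1-2x) G` with `c ≥ 0` and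
`G = (1 + 4n x(1-x)) (A n - B n) - A (n+1)` a nonnegative combination of `A - C` and
`3A - 4B + C`, both of which are squared norms of differenced sequences. So `W` decreases on
`[0, 1/2]` from `W 0 = 1`, and the symmetry `x ↦ 1 - x` covers `[1/2, 1]`.
-/

open Finset Polynomial

noncomputable def corr (f g : ℕ → ℝ) (n j : ℕ) : ℝ := ∑ k ∈ range (n + 1), f k * g (k + j)

/-- The convolution of `f` with the two-term sequence `(a, b)`. -/
noncomputable def convPair (a b : ℝ) (f : ℕ → ℝ) : ℕ → ℝ
  | 0 => a * f 0
  | k + 1 => b * f k + a * f (k + 1)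

section Sequences

variable {f g : ℕ → ℝ} {n : ℕ}

lemma corr_succ_of_eq_zero (hf : f (n + 1) = 0) (j : ℕ) : corr f g (n + 1) j = corr f g n j := by
  simp [corr, sum_range_succ _ (n + 1), hf]

lemma corr_succ_eq_add_sum (f g : ℕ → ℝ) (n j : ℕ) :
    corr f g (n + 1) j = f 0 * g j + ∑ k ∈ range (n + 1), f (k + 1) * g (k + 1 + j) := by
  rw [corr, sum_range_succ', add_comm, zero_add]

lemma corr_self_nonneg (f : ℕ → ℝ) (n : ℕ) : 0 ≤ corr f f n 0 :=
  sum_nonneg fun k _ => mul_self_nonneg (f k)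

lemma convPair_eq_zero (hf : ∀ k, n < k → f k = 0) (a b : ℝ) {k : ℕ} (hk : n + 1 < k) :
    convPair a b f k = 0 := by
  obtain ⟨k, rfl⟩ : ∃ i, k = i + 1 := ⟨k - 1, by omega⟩
  simp [convPair, hf k (by omega), hf (k + 1) (by omega)]

lemma sum_range_succ_mul_eq_corr_sub (hf : f (n + 1) = 0) (j : ℕ) :
    ∑ k ∈ range (n + 1), f (k + 1) * f (k + 1 + j) = corr f f n j - f 0 * f j := by
  rw [← corr_succ_of_eq_zero hf, corr_succ_eq_add_sum]
  ring

lemma corr_convPair_zero (hf : ∀ k, n < k → f k = 0) (a b c d : ℝ) :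
    corr (convPair a b f) (convPair c d f) (n + 1) 0
      = (a * c + b * d) * corr f f n 0 + (a * d + b * c) * corr f f n 1 := by
  have hsum : ∑ k ∈ range (n + 1), convPair a b f (k + 1) * convPair c d f (k + 1 + 0)
      = b * d * corr f f n 0 + (a * d + b * c) * corr f f n 1
        + a * c * ∑ k ∈ range (n + 1), f (k + 1) * f (k + 1 + 0) := by
    simp only [corr, mul_sum, ← sum_add_distrib]
    exact sum_congr rfl fun k _ => by simp only [convPair, add_zero]; ring
  rw [corr_succ_eq_add_sum, hsum, sum_range_succ_mul_eq_corr_sub (hf _ n.lt_succ_self)]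
  simp only [convPair]
  ring

lemma corr_convPair_one (hf : ∀ k, n < k → f k = 0) (a b c d : ℝ) :
    corr (convPair a b f) (convPair c d f) (n + 1) 1
      = (a * c + b * d) * corr f f n 1 + a * d * corr f f n 0 + b * c * corr f f n 2 := by
  have hsum : ∑ k ∈ range (n + 1), convPair a b f (k + 1) * convPair c d f (k + 1 + 1)
      = b * d * corr f f n 1 + b * c * corr f f n 2
        + a * d * ∑ k ∈ range (n + 1), f (k + 1) * f (k + 1 + 0)
        + a * c * ∑ k ∈ range (n + 1), f (k + 1) * f (k + 1 + 1) := by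
    simp only [corr, mul_sum, ← sum_add_distrib]
    exact sum_congr rfl fun k _ => by simp only [convPair, add_zero]; ring
  rw [corr_succ_eq_add_sum, hsum, sum_range_succ_mul_eq_corr_sub (hf _ n.lt_succ_self),
    sum_range_succ_mul_eq_corr_sub (hf _ n.lt_succ_self)]
  simp only [convPair, zero_add]
  ring

/-- `2 (corr f f n 0 - corr f f n 2)` is the squared norm of `(1, 1) ∗ (-1, 1) ∗ f`. -/
lemma corr_two_le_corr_zero (hf : ∀ k, n < k → f k = 0) : corr f f n 2 ≤ corr f f n 0 := by
  have hg : ∀ k, n + 1 < k → convPair (-1) 1 f k = 0 := fun k hk => convPair_eq_zero hf _ _ hk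
  have := corr_self_nonneg (convPair 1 1 (convPair (-1) 1 f)) (n + 2)
  rw [corr_convPair_zero hg, corr_convPair_zero hf, corr_convPair_one hf] at this
  linarith

/-- `2 (3 corr f f n 0 - 4 corr f f n 1 + corr f f n 2)` is the squared norm of the second
difference `(-1, 1) ∗ (-1, 1) ∗ f`. -/
lemma four_mul_corr_one_le (hf : ∀ k, n < k → f k = 0) :
    4 * corr f f n 1 ≤ 3 * corr f f n 0 + corr f f n 2 := by
  have hg : ∀ k, n + 1 < k → convPair (-1) 1 f k = 0 := fun k hk => convPair_eq_zero hf _ _ hk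
  have := corr_self_nonneg (convPair (-1) 1 (convPair (-1) 1 f)) (n + 2)
  rw [corr_convPair_zero hg, corr_convPair_zero hf, corr_convPair_one hf] at this
  linarith

end Sequences

noncomputable def bernsteinSeq (n : ℕ) (x : ℝ) (k : ℕ) : ℝ := (bernsteinPolynomial ℝ n k).eval x

section Bernstein

variable {n : ℕ} {x : ℝ}

lemma bernsteinSeq_eq (n : ℕ) (x : ℝ) (k : ℕ) :
    bernsteinSeq n x k = n.choose k * x ^ k * (1 - x) ^ (n - k) := by
  simp [bernsteinSeq, bernsteinPolynomial]

lemma bernsteinSeq_eq_zero {k : ℕ} (hk : n < k) : bernsteinSeq n x k = 0 := by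
  simp [bernsteinSeq, bernsteinPolynomial.eq_zero_of_lt ℝ hk]

lemma succ_mul_bernsteinSeq_succ (n : ℕ) (x : ℝ) (k : ℕ) :
    ((k : ℝ) + 1) * bernsteinSeq (n + 1) x (k + 1) = ((n : ℝ) + 1) * x * bernsteinSeq n x k := by
  have h : (((n + 1).choose (k + 1) * (k + 1) : ℕ) : ℝ) = (((n + 1) * n.choose k : ℕ) : ℝ) := by
    rw [Nat.add_one_mul_choose_eq]
  push_cast at h
  simp only [bernsteinSeq_eq, Nat.add_sub_add_right]
  linear_combination (x ^ (k + 1) * (1 - x) ^ (n - k)) * h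

lemma sub_mul_bernsteinSeq_succ (n : ℕ) (x : ℝ) (k : ℕ) :
    ((n : ℝ) + 1 - k) * bernsteinSeq (n + 1) x k
      = ((n : ℝ) + 1) * (1 - x) * bernsteinSeq n x k := by
  rcases lt_trichotomy k (n + 1) with hk | rfl | hk
  · have h : ((n.choose k * (n + 1) : ℕ) : ℝ) = (((n + 1).choose k * (n + 1 - k) : ℕ) : ℝ) := by
      rw [Nat.choose_mul_succ_eq]
    rw [Nat.cast_mul, Nat.cast_mul, Nat.cast_sub hk.le] at h
    push_cast at h
    simp only [bernsteinSeq_eq, show n + 1 - k = n - k + 1 by omega]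
    linear_combination (-(x ^ k * (1 - x) ^ (n - k + 1))) * h
  · simp [bernsteinSeq_eq_zero (Nat.lt_succ_self n)]
  · simp [bernsteinSeq_eq_zero hk, bernsteinSeq_eq_zero (by omega : n < k)]

lemma bernsteinSeq_succ (n : ℕ) (x : ℝ) :
    bernsteinSeq (n + 1) x = convPair (1 - x) x (bernsteinSeq n x) := by
  have hn : ((n : ℝ) + 1) ≠ 0 := by positivity
  funext k
  cases k with
  | zero =>
    have := sub_mul_bernsteinSeq_succ n x 0
    simp only [Nat.cast_zero, sub_zero] at this
    simp only [convPair]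
    exact mul_left_cancel₀ hn (by linear_combination this)
  | succ k =>
    have h₁ := succ_mul_bernsteinSeq_succ n x k
    have h₂ := sub_mul_bernsteinSeq_succ n x (k + 1)
    simp only [convPair]
    exact mul_left_cancel₀ hn (by push_cast at h₂; linear_combination h₁ + h₂)

lemma bernsteinSeq_succ_mul_succ (n : ℕ) (x : ℝ) (k : ℕ) :
    bernsteinSeq (n + 1) x (k + 1) * bernsteinSeq (n + 1) x (k + 2)
      = ((n : ℝ) + 1) * (x * (1 - x))
        * (bernsteinSeq n x (k + 1) ^ 2 - bernsteinSeq n x k * bernsteinSeq n x (k + 2)) := by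
  have hn : ((n : ℝ) + 1) ≠ 0 := by positivity
  have a₀ := succ_mul_bernsteinSeq_succ n x k
  have a₁ := succ_mul_bernsteinSeq_succ n x (k + 1)
  have b₁ := sub_mul_bernsteinSeq_succ n x (k + 1)
  have b₂ := sub_mul_bernsteinSeq_succ n x (k + 2)
  push_cast at a₁ b₁ b₂
  refine mul_left_cancel₀ hn ?_
  -- `b₁ * a₁` and `a₀ * b₂` express the product with coefficients `(n - k)(k + 2)` and
  -- `(k + 1)(n - k - 1)`, which differ by `n + 1`.
  linear_combination ((k : ℝ) + 1 + 1) * bernsteinSeq (n + 1) x (k + 2) * b₁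
    + ((n : ℝ) + 1) * (1 - x) * bernsteinSeq n x (k + 1) * a₁
    - ((n : ℝ) + 1 - (k + 2)) * bernsteinSeq (n + 1) x (k + 2) * a₀
    - ((n : ℝ) + 1) * x * bernsteinSeq n x k * b₂

lemma hasDerivAt_bernsteinSeq_succ (n k : ℕ) (x : ℝ) :
    HasDerivAt (fun y => bernsteinSeq (n + 1) y k)
      (((n : ℝ) + 1) * convPair (-1) 1 (bernsteinSeq n x) k) x := by
  refine ((bernsteinPolynomial ℝ (n + 1) k).hasDerivAt x).congr_deriv ?_
  cases k <;>
  · simp only [bernsteinPolynomial.derivative_zero, bernsteinPolynomial.derivative_succ, eval_mul,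
      eval_neg, eval_sub, eval_natCast, convPair, bernsteinSeq, Nat.add_sub_cancel]
    push_cast
    ring

end Bernstein

noncomputable def bernsteinCorr (n j : ℕ) (x : ℝ) : ℝ :=
  corr (bernsteinSeq n x) (bernsteinSeq n x) n j

section BernsteinCorr

variable (n : ℕ) (x : ℝ)

lemma bernsteinCorr_succ_zero :
    bernsteinCorr (n + 1) 0 x
      = (1 - 2 * (x * (1 - x))) * bernsteinCorr n 0 x
        + 2 * (x * (1 - x)) * bernsteinCorr n 1 x := by
  rw [bernsteinCorr, bernsteinSeq_succ,
    corr_convPair_zero (fun _ => bernsteinSeq_eq_zero), bernsteinCorr, bernsteinCorr]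
  ring

lemma bernsteinCorr_succ_one :
    bernsteinCorr (n + 1) 1 x = (1 - 2 * (x * (1 - x))) * bernsteinCorr n 1 x
      + x * (1 - x) * (bernsteinCorr n 0 x + bernsteinCorr n 2 x) := by
  rw [bernsteinCorr, bernsteinSeq_succ,
    corr_convPair_one (fun _ => bernsteinSeq_eq_zero), bernsteinCorr, bernsteinCorr, bernsteinCorr]
  ring

lemma bernsteinCorr_succ_one_eq_mul_sub :
    bernsteinCorr (n + 1) 1 x
      = ((n : ℝ) + 1) * (x * (1 - x)) * (bernsteinCorr n 0 x - bernsteinCorr n 2 x) := by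
  have hsq := sum_range_succ_mul_eq_corr_sub (bernsteinSeq_eq_zero (x := x) n.lt_succ_self) 0
  simp only [add_zero, ← sq] at hsq
  have h₀ : bernsteinSeq (n + 1) x 0 = (1 - x) * bernsteinSeq n x 0 :=
    congrFun (bernsteinSeq_succ n x) 0
  have h₁ : bernsteinSeq (n + 1) x 1 = ((n : ℝ) + 1) * x * bernsteinSeq n x 0 := by
    simpa using succ_mul_bernsteinSeq_succ n x 0
  simp only [bernsteinCorr, corr_succ_eq_add_sum, bernsteinSeq_succ_mul_succ, ← mul_sum,
    sum_sub_distrib, h₀, h₁, hsq]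
  rw [corr, corr]
  ring

lemma hasDerivAt_bernsteinCorr_succ_zero :
    HasDerivAt (bernsteinCorr (n + 1) 0)
      (2 * ((n : ℝ) + 1) * (1 - 2 * x) * (bernsteinCorr n 1 x - bernsteinCorr n 0 x)) x := by
  have hfun : bernsteinCorr (n + 1) 0
      = fun y => ∑ k ∈ range (n + 2), bernsteinSeq (n + 1) y k * bernsteinSeq (n + 1) y k := by
    funext y
    simp only [bernsteinCorr, corr, add_zero]
  rw [hfun]
  refine (HasDerivAt.fun_sum fun k _ => (hasDerivAt_bernsteinSeq_succ n k x).fun_mul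
    (hasDerivAt_bernsteinSeq_succ n k x)).congr_deriv ?_
  have hsum : ∑ k ∈ range (n + 2), (((n : ℝ) + 1) * convPair (-1) 1 (bernsteinSeq n x) k
        * bernsteinSeq (n + 1) x k
        + bernsteinSeq (n + 1) x k * (((n : ℝ) + 1) * convPair (-1) 1 (bernsteinSeq n x) k))
      = 2 * ((n : ℝ) + 1)
        * corr (bernsteinSeq (n + 1) x) (convPair (-1) 1 (bernsteinSeq n x)) (n + 1) 0 := by
    rw [corr, mul_sum]
    exact sum_congr rfl fun k _ => by rw [add_zero]; ring
  rw [hsum, bernsteinSeq_succ, corr_convPair_zero (fun _ => bernsteinSeq_eq_zero), bernsteinCorr,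
    bernsteinCorr]
  ring

lemma bernsteinCorr_succ_succ_zero_le (hx₀ : 0 ≤ x) (hx₁ : x ≤ 1) :
    bernsteinCorr (n + 2) 0 x ≤ (1 + 4 * ((n : ℝ) + 1) * (x * (1 - x)))
      * (bernsteinCorr (n + 1) 0 x - bernsteinCorr (n + 1) 1 x) := by
  have ht : 0 ≤ x * (1 - x) := mul_nonneg hx₀ (sub_nonneg.2 hx₁)
  have hQ : bernsteinCorr n 2 x ≤ bernsteinCorr n 0 x :=
    corr_two_le_corr_zero fun _ => bernsteinSeq_eq_zero
  have hR : 4 * bernsteinCorr n 1 x ≤ 3 * bernsteinCorr n 0 x + bernsteinCorr n 2 x :=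
    four_mul_corr_one_le fun _ => bernsteinSeq_eq_zero
  have hgap : (1 + 4 * ((n : ℝ) + 1) * (x * (1 - x)))
      * (bernsteinCorr (n + 1) 0 x - bernsteinCorr (n + 1) 1 x) - bernsteinCorr (n + 2) 0 x
      = x * (1 - x) * ((2 * (n : ℝ) + 3) * (1 - 2 * x) ^ 2
          * (3 * bernsteinCorr n 0 x - 4 * bernsteinCorr n 1 x + bernsteinCorr n 2 x)
        + (bernsteinCorr n 0 x - bernsteinCorr n 2 x)) / 2 := by
    linear_combination (-1 : ℝ) * bernsteinCorr_succ_zero (n + 1) x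
      + ((4 * ((n : ℝ) + 1) + 2) * (x * (1 - x))) * bernsteinCorr_succ_zero n x
      - ((4 * ((n : ℝ) + 1) + 2) * (x * (1 - x))) * bernsteinCorr_succ_one n x
      - bernsteinCorr_succ_one_eq_mul_sub n x
  rw [← sub_nonneg, hgap]
  exact div_nonneg (mul_nonneg ht (add_nonneg (mul_nonneg (by positivity) (by linarith))
    (by linarith))) zero_le_two

lemma bernsteinCorr_zero_at_zero : bernsteinCorr n 0 0 = 1 := by
  simp [bernsteinCorr, corr, bernsteinSeq, bernsteinPolynomial.eval_at_0]

lemma bernsteinCorr_zero_one_sub : bernsteinCorr n 0 (1 - x) = bernsteinCorr n 0 x := by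
  have hflip : ∀ k ∈ range (n + 1), bernsteinSeq n (1 - x) k = bernsteinSeq n x (n - k) :=
    fun k hk => by
      rw [bernsteinSeq, bernsteinSeq, ← bernsteinPolynomial.flip ℝ n k (mem_range_succ_iff.1 hk),
        eval_comp]
      simp
  simp only [bernsteinCorr, corr, add_zero]
  rw [sum_congr rfl fun k hk => by rw [hflip k hk]]
  simpa using sum_range_reflect (fun k => bernsteinSeq n x k * bernsteinSeq n x k) (n + 1)

lemma hasDerivAt_bernsteinCorr_pow_mul_pow :
    HasDerivAt (fun y => bernsteinCorr (n + 2) 0 y ^ (2 * (n + 1))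
      * (1 + 4 * ((n : ℝ) + 1) * (y * (1 - y))) ^ (n + 2))
      (-(4 * ((n : ℝ) + 1) * ((n : ℝ) + 2) * (1 - 2 * x) * bernsteinCorr (n + 2) 0 x ^ (2 * n + 1)
        * (1 + 4 * ((n : ℝ) + 1) * (x * (1 - x))) ^ (n + 1)
        * ((1 + 4 * ((n : ℝ) + 1) * (x * (1 - x)))
          * (bernsteinCorr (n + 1) 0 x - bernsteinCorr (n + 1) 1 x)
          - bernsteinCorr (n + 2) 0 x))) x := by
  have hP : HasDerivAt (fun y => 1 + 4 * ((n : ℝ) + 1) * (y * (1 - y)))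
      (4 * ((n : ℝ) + 1) * (1 - 2 * x)) x :=
    ((((hasDerivAt_id' x).fun_mul ((hasDerivAt_id' x).const_sub 1)).const_mul
      (4 * ((n : ℝ) + 1))).const_add 1).congr_deriv (by ring)
  refine (((hasDerivAt_bernsteinCorr_succ_zero (n + 1) x).fun_pow _).fun_mul
    (hP.fun_pow _)).congr_deriv ?_
  rw [show 2 * (n + 1) - 1 = 2 * n + 1 by omega, show n + 2 - 1 = n + 1 by omega,
    show n + 1 + 1 = n + 2 from rfl]
  push_cast
  ring

lemma antitoneOn_bernsteinCorr_pow_mul_pow :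
    AntitoneOn (fun y => bernsteinCorr (n + 2) 0 y ^ (2 * (n + 1))
      * (1 + 4 * ((n : ℝ) + 1) * (y * (1 - y))) ^ (n + 2)) (Set.Icc 0 (1 / 2)) := by
  have hW := fun y => hasDerivAt_bernsteinCorr_pow_mul_pow n y
  refine antitoneOn_of_hasDerivWithinAt_nonpos (convex_Icc 0 (1 / 2))
    (fun y _ => (hW y).continuousAt.continuousWithinAt) (fun y _ => (hW y).hasDerivWithinAt)
    fun y hy => ?_
  rw [interior_Icc] at hy
  have hA : 0 ≤ bernsteinCorr (n + 2) 0 y := corr_self_nonneg _ _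
  have hG := bernsteinCorr_succ_succ_zero_le n y hy.1.le (by linarith [hy.2])
  have h₁ : 0 ≤ 1 - 2 * y := by linarith [hy.2]
  have ht : 0 ≤ y * (1 - y) := mul_nonneg hy.1.le (by linarith [hy.2])
  refine neg_nonpos.2 (mul_nonneg (mul_nonneg (mul_nonneg (mul_nonneg ?_ h₁) (pow_nonneg hA _))
    (pow_nonneg ?_ _)) (sub_nonneg.2 hG)) <;> positivity

end BernsteinCorr

lemma le_rpow_neg_div_of_pow_mul_pow_le_one {a P : ℝ} {p q : ℕ} (ha : 0 ≤ a) (hP : 0 < P)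
    (hp : p ≠ 0) (h : a ^ p * P ^ q ≤ 1) : a ≤ P ^ (-((q : ℝ) / p)) := by
  have hpow : (P ^ (-((q : ℝ) / p))) ^ p = (P ^ q)⁻¹ := by
    rw [← Real.rpow_natCast, ← Real.rpow_mul hP.le, neg_mul,
      div_mul_cancel₀ _ (Nat.cast_ne_zero.2 hp), Real.rpow_neg hP.le, Real.rpow_natCast]
  refine (pow_le_pow_iff_left₀ ha (by positivity) hp).1 ?_
  rw [hpow, ← one_div, le_div_iff₀ (pow_pos hP q)]
  exact h

lemma bernsteinCorr_zero_le_rpow_of_le_half (n : ℕ) {x : ℝ} (hx₀ : 0 ≤ x) (hx : x ≤ 1 / 2) :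
    bernsteinCorr (n + 2) 0 x
      ≤ (1 + 4 * ((n : ℝ) + 1) * (x * (1 - x))) ^ (-((n : ℝ) + 2) / (2 * ((n : ℝ) + 1))) := by
  have hW := antitoneOn_bernsteinCorr_pow_mul_pow n (a := 0) (b := x)
    ⟨le_rfl, by norm_num⟩ ⟨hx₀, hx⟩ hx₀
  simp only [bernsteinCorr_zero_at_zero, one_pow, sub_zero, zero_mul, mul_zero, add_zero,
    one_mul] at hW
  have hA : 0 ≤ bernsteinCorr (n + 2) 0 x := corr_self_nonneg _ _
  have hP : 0 < 1 + 4 * ((n : ℝ) + 1) * (x * (1 - x)) := by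
    have : 0 ≤ x * (1 - x) := mul_nonneg hx₀ (by linarith)
    positivity
  refine (le_rpow_neg_div_of_pow_mul_pow_le_one hA hP (by omega) hW).trans_eq ?_
  congr 1
  push_cast
  ring

lemma sum_choose_sq_mul_eq_bernsteinCorr (n : ℕ) (x : ℝ) :
    ∑ k ∈ range (n + 1), (n.choose k : ℝ) ^ 2 * x ^ (2 * k) * (1 - x) ^ (2 * (n - k))
      = bernsteinCorr n 0 x :=
  sum_congr rfl fun k _ => by rw [add_zero, bernsteinSeq_eq]; ring

/-- For `n ≥ 2` and `x ∈ [0,1]`,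
`F_n(x) ≤ (1+4(n-1)x(1-x))^{-n/(2(n-1))}`. -/
theorem stmt_17 (n : ℕ) (hn : 2 ≤ n) (x : ℝ) (hx : x ∈ Set.Icc (0:ℝ) 1) :
    (∑ k ∈ Finset.range (n + 1), (n.choose k : ℝ) ^ 2 * x ^ (2 * k) * (1 - x) ^ (2 * (n - k))) ≤
      (1 + 4 * ((n : ℝ) - 1) * x * (1 - x)) ^ (-(n : ℝ) / (2 * ((n : ℝ) - 1))) := by
  obtain ⟨hx₀, hx₁⟩ := hx
  obtain ⟨m, rfl⟩ : ∃ m, n = m + 2 := ⟨n - 2, by omega⟩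
  have hbase : 1 + 4 * (((m + 2 : ℕ) : ℝ) - 1) * x * (1 - x)
      = 1 + 4 * ((m : ℝ) + 1) * (x * (1 - x)) := by push_cast; ring
  have hexp : -((m + 2 : ℕ) : ℝ) / (2 * (((m + 2 : ℕ) : ℝ) - 1))
      = -((m : ℝ) + 2) / (2 * ((m : ℝ) + 1)) := by push_cast; ring
  rw [sum_choose_sq_mul_eq_bernsteinCorr, hbase, hexp]
  rcases le_total x (1 / 2) with hx | hx
  · exact bernsteinCorr_zero_le_rpow_of_le_half m hx₀ hx
  · have := bernsteinCorr_zero_le_rpow_of_le_half m (x := 1 - x) (by linarith) (by linarith)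
    rwa [bernsteinCorr_zero_one_sub, sub_sub_cancel, mul_comm (1 - x)] at this
end

section
/- Let $n\in\mathbb{N}$, $n\ge1$, and define $G_n(x)=\sum_{k=0}^{\infty}\binom{n+k-1}{k}^2 x^{2k}(1+x)^{-2(n+k)}$ for $x\ge0$. Then for every $x\ge0$, $G_n(x)\le\big(4(n+1)x(1+x)+1\big)^{-\frac{n}{2(n+1)}}$. -/
/-!
With `s = x / (1 + x)`, the numbers `binom(n+k-1, k) s^k` are the Taylor coefficients of
`(1 - s e^{iθ})^{-n}`, so Parseval's identity gives
`2π G_n(x) = ∫_0^{2π} (1 + 2x(1+x)(1 - cos θ))^{-n} dθ`.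
Bernoulli's inequality bounds the integrand by `((1 + 2(n+1)x(1+x)(1 - cos θ))^{-1})^{n/(n+1)}`,
Jensen's inequality for the concave power `t ↦ t^{n/(n+1)}` takes the power out of the integral,
and the remaining integral is `2π (1 + 4(n+1)x(1+x))^{-1/2}`: this is the case `n = 1` of the
representation, in which `G_1(y) = 1 / (1 + 2y)` is a geometric series.
-/

open MeasureTheory Set Real ComplexConjugate

theorem setIntegral_exp_int_mul_I (d : ℤ) :
    ∫ θ in Ioc 0 (2 * π), Complex.exp (d * θ * Complex.I) =
      if d = 0 then (2 * π : ℂ) else 0 := by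
  rw [← intervalIntegral.integral_of_le (by positivity)]
  split_ifs with hd
  · simp [hd]
  have hc : (d : ℂ) * Complex.I ≠ 0 := by simp [hd]
  have hperiod : Complex.exp (d * Complex.I * (2 * π : ℝ)) = 1 := by
    simpa [mul_comm, mul_assoc, mul_left_comm] using Complex.exp_int_mul_two_pi_mul_I d
  simp_rw [mul_right_comm _ _ Complex.I]
  rw [integral_exp_mul_complex hc, hperiod]
  simp

theorem tsum_prod_ite_fst_eq_snd {α M : Type*} [DecidableEq α] [AddCommMonoid M]
    [TopologicalSpace M] (f : α → M) :
    ∑' p : α × α, (if p.1 = p.2 then f p.1 else 0) = ∑' a, f a := by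
  refine (Function.Injective.tsum_eq (g := fun a : α => (a, a))
    (fun j k h => congrArg Prod.fst h) ?_).symm.trans ?_
  · rintro ⟨j, k⟩ hjk
    obtain rfl : j = k := by by_contra h; simp [h] at hjk
    exact ⟨j, rfl⟩
  · simp

theorem setIntegral_norm_sq_tsum_mul_exp {a : ℕ → ℂ} (ha : Summable (‖a ·‖)) :
    ∫ θ in Ioc 0 (2 * π), ‖∑' k : ℕ, a k * Complex.exp (k * θ * Complex.I)‖ ^ 2 =
      2 * π * ∑' k, ‖a k‖ ^ 2 := by
  -- `‖F‖² = F * conj F` is a double series whose off-diagonal terms integrate to zero.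
  set T : ℕ × ℕ → ℝ → ℂ := fun p θ =>
    a p.1 * conj (a p.2) * Complex.exp (((p.1 : ℤ) - p.2 : ℤ) * θ * Complex.I) with hT
  have hsq : ∀ θ : ℝ, ((‖∑' k : ℕ, a k * Complex.exp (k * θ * Complex.I)‖ ^ 2 : ℝ) : ℂ) =
      ∑' p, T p θ := by
    intro θ
    have hs : Summable fun k : ℕ => ‖a k * Complex.exp (k * θ * Complex.I)‖ := by
      simpa [Complex.norm_exp] using ha
    rw [Complex.ofReal_pow, ← Complex.mul_conj', Complex.conj_tsum,
      tsum_mul_tsum_of_summable_norm hs (by simpa using hs)]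
    refine tsum_congr fun p => ?_
    simp only [hT, map_mul, ← Complex.exp_conj, Complex.conj_ofReal, Complex.conj_natCast,
      Complex.conj_I]
    rw [mul_mul_mul_comm, ← Complex.exp_add]
    push_cast
    ring_nf
  have hT_norm : ∀ p, ∫ θ in Ioc 0 (2 * π), ‖T p θ‖ = 2 * π * (‖a p.1‖ * ‖a p.2‖) := by
    simp [hT, Complex.norm_exp, pi_pos.le]
  have hT_integral : ∀ p, ∫ θ in Ioc 0 (2 * π), T p θ =
      if p.1 = p.2 then ((2 * π * ‖a p.1‖ ^ 2 : ℝ) : ℂ) else 0 := by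
    rintro ⟨j, k⟩
    simp only [hT, integral_const_mul, setIntegral_exp_int_mul_I, sub_eq_zero, Nat.cast_inj]
    split_ifs with h
    · subst h
      rw [Complex.mul_conj']
      push_cast
      ring
    · rw [mul_zero]
  apply Complex.ofReal_injective
  calc _ = ∫ θ in Ioc 0 (2 * π), ∑' p, T p θ := by
        simp_rw [← integral_complex_ofReal, hsq]
    _ = ∑' p, ∫ θ in Ioc 0 (2 * π), T p θ := by
        refine (integral_tsum_of_summable_integral_norm
          (fun p => (by fun_prop : Continuous (T p)).integrableOn_Ioc) ?_).symm
        simp_rw [hT_norm]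
        exact (ha.mul_of_nonneg ha (fun _ => norm_nonneg _) fun _ => norm_nonneg _).mul_left _
    _ = ∑' k, ((2 * π * ‖a k‖ ^ 2 : ℝ) : ℂ) := by
        simp_rw [hT_integral]
        exact tsum_prod_ite_fst_eq_snd fun k => ((2 * π * ‖a k‖ ^ 2 : ℝ) : ℂ)
    _ = _ := by rw [← Complex.ofReal_tsum, tsum_mul_left]

theorem hasSum_choose_mul_exp (m : ℕ) {s : ℝ} (hs0 : 0 ≤ s) (hs1 : s < 1) (θ : ℝ) :
    HasSum (fun k : ℕ => ((k + m).choose m * s ^ k : ℂ) * Complex.exp (k * θ * Complex.I))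
      (1 / (1 - s * Complex.exp (θ * Complex.I)) ^ (m + 1)) := by
  have hr : ‖(s : ℂ) * Complex.exp (θ * Complex.I)‖ < 1 := by
    simpa [Complex.norm_exp, abs_of_nonneg hs0] using hs1
  simpa only [mul_pow, ← Complex.exp_nat_mul, mul_assoc] using
    hasSum_choose_mul_geometric_of_norm_lt_one m hr

theorem norm_sq_one_sub_mul_exp (s θ : ℝ) :
    ‖1 - s * Complex.exp (θ * Complex.I)‖ ^ 2 = 1 - 2 * s * cos θ + s ^ 2 := by
  rw [Complex.sq_norm, Complex.normSq_apply]
  simp only [Complex.sub_re, Complex.sub_im, Complex.one_re, Complex.one_im, Complex.re_ofReal_mul,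
    Complex.im_ofReal_mul, Complex.exp_ofReal_mul_I_re, Complex.exp_ofReal_mul_I_im]
  linear_combination s ^ 2 * sin_sq_add_cos_sq θ

theorem setIntegral_inv_one_sub_two_mul_cos_add_sq_pow (m : ℕ) {s : ℝ} (hs0 : 0 ≤ s)
    (hs1 : s < 1) :
    ∫ θ in Ioc 0 (2 * π), ((1 - 2 * s * cos θ + s ^ 2) ^ (m + 1))⁻¹ =
      2 * π * ∑' k : ℕ, ((k + m).choose m : ℝ) ^ 2 * s ^ (2 * k) := by
  have hnorm : ∀ k : ℕ, ‖((k + m).choose m * s ^ k : ℂ)‖ = (k + m).choose m * s ^ k := by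
    simp [abs_of_nonneg hs0]
  have hsum : Summable fun k : ℕ => ‖((k + m).choose m * s ^ k : ℂ)‖ := by
    simpa only [hnorm] using
      summable_choose_mul_geometric_of_norm_lt_one m (by rwa [norm_of_nonneg hs0])
  have hF : ∀ θ : ℝ, ((1 - 2 * s * cos θ + s ^ 2) ^ (m + 1))⁻¹ =
      ‖∑' k : ℕ, ((k + m).choose m * s ^ k : ℂ) * Complex.exp (k * θ * Complex.I)‖ ^ 2 := by
    intro θ
    rw [(hasSum_choose_mul_exp m hs0 hs1 θ).tsum_eq, norm_div, norm_one, norm_pow, div_pow,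
      one_pow, ← pow_mul, mul_comm (m + 1) 2, pow_mul, norm_sq_one_sub_mul_exp, one_div]
  simp_rw [hF, setIntegral_norm_sq_tsum_mul_exp hsum, hnorm, mul_pow, ← pow_mul']

noncomputable def baskakovSqSum (n : ℕ) (x : ℝ) : ℝ :=
  ∑' k : ℕ, ((n + k - 1).choose k : ℝ) ^ 2 * x ^ (2 * k) * (1 + x) ^ (-(2 * ((n : ℤ) + k)))

theorem baskakovSqSum_succ (m : ℕ) {x : ℝ} (hx : 1 + x ≠ 0) :
    baskakovSqSum (m + 1) x =
      ((1 + x) ^ (2 * (m + 1)))⁻¹ *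
        ∑' k : ℕ, ((k + m).choose m : ℝ) ^ 2 * (x / (1 + x)) ^ (2 * k) := by
  rw [baskakovSqSum, ← tsum_mul_left]
  refine tsum_congr fun k => ?_
  rw [show m + 1 + k - 1 = k + m by omega, Nat.choose_symm_add, div_pow,
    show -(2 * (((m + 1 : ℕ) : ℤ) + k)) = -((2 * (m + 1) + 2 * k : ℕ) : ℤ) by push_cast; ring,
    zpow_neg, zpow_natCast, pow_add]
  field_simp

theorem setIntegral_eq_two_pi_mul_baskakovSqSum (m : ℕ) {x : ℝ} (hx : 0 ≤ x) :
    ∫ θ in Ioc 0 (2 * π), ((1 + 2 * (x * (1 + x)) * (1 - cos θ)) ^ (m + 1))⁻¹ =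
      2 * π * baskakovSqSum (m + 1) x := by
  have hx1 : 0 < 1 + x := by linarith
  have hs1 : x / (1 + x) < 1 := by rw [div_lt_one hx1]; linarith
  have hbase : ∀ θ, 1 + 2 * (x * (1 + x)) * (1 - cos θ) =
      (1 + x) ^ 2 * (1 - 2 * (x / (1 + x)) * cos θ + (x / (1 + x)) ^ 2) := fun θ => by
    field_simp; ring
  simp_rw [hbase, mul_pow, mul_inv, integral_const_mul,
    setIntegral_inv_one_sub_two_mul_cos_add_sq_pow m (by positivity) hs1,
    baskakovSqSum_succ m hx1.ne', ← pow_mul]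
  ring

theorem baskakovSqSum_one {y : ℝ} (hy : 0 ≤ y) : baskakovSqSum 1 y = (1 + 2 * y)⁻¹ := by
  have hy1 : 0 < 1 + y := by linarith
  have hr1 : (y / (1 + y)) ^ 2 < 1 := by
    rw [sq_lt_one_iff_abs_lt_one, abs_of_nonneg (by positivity), div_lt_one hy1]; linarith
  simp only [baskakovSqSum_succ 0 hy1.ne', Nat.choose_zero_right, Nat.cast_one, one_pow, one_mul,
    pow_mul, tsum_geometric_of_lt_one (by positivity) hr1, ← mul_inv]
  congr 1
  field_simp
  ring

theorem setIntegral_inv_one_add_mul_one_sub_cos {A : ℝ} (hA : 0 ≤ A) :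
    ∫ θ in Ioc 0 (2 * π), (1 + 2 * A * (1 - cos θ))⁻¹ =
      2 * π * (1 + 4 * A) ^ (-(1 / 2) : ℝ) := by
  set y := (√(1 + 4 * A) - 1) / 2 with hy
  have hsqrt : √(1 + 4 * A) ^ 2 = 1 + 4 * A := sq_sqrt (by positivity)
  have hy0 : 0 ≤ y := by
    have : 1 ≤ √(1 + 4 * A) := one_le_sqrt.mpr (by linarith)
    rw [hy]; linarith
  have hyA : y * (1 + y) = A := by rw [hy]; linear_combination hsqrt / 4
  have h := setIntegral_eq_two_pi_mul_baskakovSqSum 0 hy0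
  simp only [zero_add, pow_one, hyA, baskakovSqSum_one hy0] at h
  rw [h, rpow_neg (by positivity), ← sqrt_eq_rpow, hy]
  ring

theorem inv_one_add_pow_le_rpow (n : ℕ) {u : ℝ} (hu : 0 ≤ u) :
    ((1 + u) ^ n)⁻¹ ≤ (1 + (n + 1) * u)⁻¹ ^ ((n : ℝ) / (n + 1)) := by
  have hbern : 1 + ((n + 1 : ℕ) : ℝ) * u ≤ (1 + u) ^ (n + 1) :=
    one_add_mul_le_pow (by linarith) _
  push_cast at hbern
  rw [inv_rpow (by positivity)]
  refine inv_anti₀ (by positivity) ?_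
  calc (1 + (n + 1) * u) ^ ((n : ℝ) / (n + 1))
      ≤ ((1 + u) ^ (n + 1)) ^ ((n : ℝ) / (n + 1)) := by gcongr
    _ = (1 + u) ^ n := by
        rw [← rpow_natCast, ← rpow_mul (by positivity), ← rpow_natCast]
        push_cast
        field_simp

theorem setIntegral_rpow_le {α : Type*} [MeasurableSpace α] {μ : Measure α} {s : Set α}
    {f : α → ℝ} {q : ℝ} (hs0 : μ s ≠ 0) (hs : μ s ≠ ⊤) (hq0 : 0 ≤ q) (hq1 : q ≤ 1)
    (hf0 : ∀ᵐ x ∂μ.restrict s, 0 ≤ f x) (hf : IntegrableOn f s μ)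
    (hfq : IntegrableOn (fun x => f x ^ q) s μ) :
    ∫ x in s, f x ^ q ∂μ ≤ μ.real s * ((∫ x in s, f x ∂μ) / μ.real s) ^ q := by
  have hpos : 0 < μ.real s := ENNReal.toReal_pos hs0 hs
  have h := (concaveOn_rpow hq0 hq1).le_map_set_average
    (continuousOn_id.rpow_const fun _ _ => Or.inr hq0) isClosed_Ici hs0 hs hf0 hf hfq
  rw [setAverage_eq, setAverage_eq, smul_eq_mul, smul_eq_mul] at h
  rw [div_eq_inv_mul]
  calc ∫ x in s, f x ^ q ∂μ = μ.real s * ((μ.real s)⁻¹ * ∫ x in s, f x ^ q ∂μ) := by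
        field_simp
    _ ≤ _ := mul_le_mul_of_nonneg_left h hpos.le

theorem one_le_one_add_mul_one_sub_cos {c : ℝ} (hc : 0 ≤ c) (θ : ℝ) :
    1 ≤ 1 + c * (1 - cos θ) :=
  le_add_of_nonneg_right (mul_nonneg hc (sub_nonneg.2 (cos_le_one θ)))

theorem setIntegral_inv_pow_one_add_mul_one_sub_cos_le (n : ℕ) {b : ℝ} (hb : 0 ≤ b) :
    ∫ θ in Ioc 0 (2 * π), ((1 + 2 * b * (1 - cos θ)) ^ n)⁻¹ ≤
      2 * π * (4 * ((n : ℝ) + 1) * b + 1) ^ (-(n : ℝ) / (2 * ((n : ℝ) + 1))) := by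
  set A := ((n : ℝ) + 1) * b with hA
  set q := (n : ℝ) / (n + 1) with hq
  have hbase : ∀ {c : ℝ}, 0 ≤ c → ∀ θ, 1 + c * (1 - cos θ) ≠ 0 := fun hc θ =>
    (zero_lt_one.trans_le (one_le_one_add_mul_one_sub_cos hc θ)).ne'
  have hf : Continuous fun θ => (1 + 2 * A * (1 - cos θ))⁻¹ :=
    Continuous.inv₀ (by fun_prop) (hbase (by positivity))
  have hf0 : ∀ θ, 0 ≤ (1 + 2 * A * (1 - cos θ))⁻¹ := fun θ =>
    inv_nonneg.2 (zero_le_one.trans (one_le_one_add_mul_one_sub_cos (by positivity) θ))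
  have hfq : Continuous fun θ => (1 + 2 * A * (1 - cos θ))⁻¹ ^ q :=
    hf.rpow_const fun _ => Or.inr (by positivity)
  have hvol : volume.real (Ioc 0 (2 * π)) = 2 * π := by simp [pi_pos.le]
  calc ∫ θ in Ioc 0 (2 * π), ((1 + 2 * b * (1 - cos θ)) ^ n)⁻¹
      ≤ ∫ θ in Ioc 0 (2 * π), (1 + 2 * A * (1 - cos θ))⁻¹ ^ q := by
        refine setIntegral_mono ((Continuous.inv₀ (by fun_prop) fun θ =>
          pow_ne_zero _ (hbase (by positivity) θ)).integrableOn_Ioc) hfq.integrableOn_Ioc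
          fun θ => ?_
        have h := inv_one_add_pow_le_rpow n
          (mul_nonneg (by positivity : 0 ≤ 2 * b) (sub_nonneg.2 (cos_le_one θ)))
        rwa [show 1 + (n + 1) * (2 * b * (1 - cos θ)) = 1 + 2 * A * (1 - cos θ) by
          rw [hA]; ring] at h
    _ ≤ 2 * π * ((∫ θ in Ioc 0 (2 * π), (1 + 2 * A * (1 - cos θ))⁻¹) / (2 * π)) ^ q := by
        have h := setIntegral_rpow_le (μ := volume) (s := Ioc 0 (2 * π)) (by simp [pi_pos])
          measure_Ioc_lt_top.ne (by positivity) (div_le_one_of_le₀ (by linarith) (by positivity))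
          (ae_of_all _ hf0) hf.integrableOn_Ioc hfq.integrableOn_Ioc
        rwa [hvol] at h
    _ = 2 * π * (4 * ((n : ℝ) + 1) * b + 1) ^ (-(n : ℝ) / (2 * ((n : ℝ) + 1))) := by
        rw [setIntegral_inv_one_add_mul_one_sub_cos (by positivity),
          mul_div_cancel_left₀ _ (by positivity), ← rpow_mul (by positivity), hA, hq]
        congr 2
        · ring
        · field_simp

/-- For `n ≥ 1` and `x ≥ 0`, the sum of squared Baskakov fundamental functions
satisfies `G_n(x) ≤ (4(n+1)x(1+x)+1)^{-n/(2(n+1))}`. -/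
theorem stmt_18 (n : ℕ) (hn : 1 ≤ n) (x : ℝ) (hx : 0 ≤ x) :
    (∑' k : ℕ, ((n + k - 1).choose k : ℝ) ^ 2 * x ^ (2 * k) * (1 + x) ^ (-(2 * ((n : ℤ) + k)))) ≤
      (4 * ((n : ℝ) + 1) * x * (1 + x) + 1) ^ (-(n : ℝ) / (2 * ((n : ℝ) + 1))) := by
  show baskakovSqSum n x ≤ _
  obtain ⟨m, rfl⟩ : ∃ m, n = m + 1 := ⟨n - 1, by omega⟩
  have h := setIntegral_inv_pow_one_add_mul_one_sub_cos_le (m + 1) (b := x * (1 + x))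
    (by positivity)
  rw [setIntegral_eq_two_pi_mul_baskakovSqSum m hx, ← mul_assoc _ x] at h
  exact le_of_mul_le_mul_left h (by positivity)
end

section
/- Let $n>0$ be a real number and define $K_n(x)=\sum_{k=0}^{\infty}\left(e^{-nx}\frac{(nx)^k}{k!}\right)^2$ for $x\ge0$. Then for every $x\ge0$, $K_n(x)\le\frac{1}{\sqrt{4nx+1}}$. -/
/-!
With `t = n x`, the sum is `e^{-2t} S(t)` where `S(t) = ∑ (t^k/k!)²`. By the Cauchy product and
Vandermonde's identity `∑ᵢ C(m,i)² = C(2m,m)`, the square `S(t)²` is the power series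
`∑ₘ C(2m,m)² t^{2m}/(2m)!`. The bound `(2m+1) C(2m,m)² ≤ 16^m` then compares `S(t)² (4t+1)`
termwise with the even and odd parts of the series of `e^{4t}`, giving `S(t)² (4t+1) ≤ e^{4t}`,
which is the claim after taking square roots.
-/

open Nat Finset

namespace Nat

theorem two_mul_add_one_mul_centralBinom_sq_le (m : ℕ) :
    (2 * m + 1) * centralBinom m ^ 2 ≤ 16 ^ m := by
  induction m with
  | zero => simp
  | succ m ih =>
    refine Nat.le_of_mul_le_mul_left ?_ (by positivity : 0 < (m + 1) ^ 2)
    calc (m + 1) ^ 2 * ((2 * (m + 1) + 1) * centralBinom (m + 1) ^ 2)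
        = (2 * m + 3) * ((m + 1) * centralBinom (m + 1)) ^ 2 := by ring
      _ = ((2 * m + 3) * (2 * m + 1)) * (4 * ((2 * m + 1) * centralBinom m ^ 2)) := by
        rw [succ_mul_centralBinom_succ]; ring
      _ ≤ ((2 * m + 2) * (2 * m + 2)) * (4 * 16 ^ m) :=
        Nat.mul_le_mul (by nlinarith) (Nat.mul_le_mul_left 4 ih)
      _ = (m + 1) ^ 2 * 16 ^ (m + 1) := by ring

theorem centralBinom_sq_le (m : ℕ) : centralBinom m ^ 2 ≤ 16 ^ m :=
  (Nat.le_mul_of_pos_left _ (by omega)).trans (two_mul_add_one_mul_centralBinom_sq_le m)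

end Nat

namespace Real

theorem summable_sq_pow_div_factorial (t : ℝ) : Summable fun k : ℕ => (t ^ k / k !) ^ 2 := by
  refine (summable_pow_div_factorial (t ^ 2)).of_nonneg_of_le (fun k => by positivity) fun k => ?_
  rw [div_pow, ← pow_mul, mul_comm k 2, pow_mul]
  have : (1 : ℝ) ≤ k ! := by exact_mod_cast k.factorial_pos
  gcongr
  nlinarith

theorem sum_antidiagonal_sq_pow_div_factorial (t : ℝ) (m : ℕ) :
    ∑ kl ∈ antidiagonal m, (t ^ kl.1 / kl.1 !) ^ 2 * (t ^ kl.2 / kl.2 !) ^ 2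
      = (centralBinom m : ℝ) ^ 2 / (2 * m) ! * t ^ (2 * m) := by
  have hterm : ∀ i ∈ range (m + 1), (t ^ i / i !) ^ 2 * (t ^ (m - i) / (m - i) !) ^ 2
      = (m.choose i : ℝ) ^ 2 * (t ^ m / m !) ^ 2 := by
    intro i hi
    have him : i ≤ m := mem_range_succ_iff.mp hi
    rw [cast_choose ℝ him, ← Nat.add_sub_cancel' him, pow_add, Nat.add_sub_cancel_left]
    field_simp
  have hfact : ((2 * m) ! : ℝ) = centralBinom m * m ! * m ! := by
    rw [centralBinom_eq_two_mul_choose, two_mul, ← add_choose_mul_factorial_mul_factorial m m]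
    push_cast; ring
  have hvandermonde : ∑ i ∈ range (m + 1), (m.choose i : ℝ) ^ 2 = centralBinom m := by
    rw [centralBinom_eq_two_mul_choose]; exact_mod_cast sum_range_choose_sq m
  rw [Nat.sum_antidiagonal_eq_sum_range_succ_mk, sum_congr rfl hterm, ← sum_mul, hvandermonde,
    hfact]
  have : (centralBinom m : ℝ) ≠ 0 := by exact_mod_cast (centralBinom_pos m).ne'
  field_simp
  ring

theorem hasSum_sq_tsum_sq_pow_div_factorial (t : ℝ) :
    HasSum (fun m : ℕ => (centralBinom m : ℝ) ^ 2 / (2 * m) ! * t ^ (2 * m))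
      ((∑' k : ℕ, (t ^ k / k !) ^ 2) ^ 2) := by
  set g : ℕ → ℝ := fun k => (t ^ k / k !) ^ 2 with hg_def
  have hg : Summable g := summable_sq_pow_div_factorial t
  have hgn : ∀ k : ℕ, 0 ≤ (t ^ k / k !) ^ 2 := fun k => by positivity
  have hprod := hg.mul_of_nonneg hg hgn hgn
  have hcauchy := hg.tsum_mul_tsum_eq_tsum_sum_antidiagonal hg hprod
  have hsummable := summable_sum_mul_antidiagonal_of_summable_mul hprod
  simp only [hg_def, sum_antidiagonal_sq_pow_div_factorial] at hcauchy hsummable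
  rw [sq, hcauchy]
  exact hsummable.hasSum

theorem centralBinom_sq_div_factorial_mul_le {t : ℝ} (ht : 0 ≤ t) (m : ℕ) :
    (centralBinom m : ℝ) ^ 2 / (2 * m) ! * t ^ (2 * m) * (4 * t + 1)
      ≤ (4 * t) ^ (2 * m) / (2 * m) ! + (4 * t) ^ (2 * m + 1) / (2 * m + 1) ! := by
  have heven : (centralBinom m : ℝ) ^ 2 ≤ 16 ^ m := by exact_mod_cast centralBinom_sq_le m
  have hodd : (2 * m + 1) * (centralBinom m : ℝ) ^ 2 ≤ 16 ^ m := by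
    exact_mod_cast two_mul_add_one_mul_centralBinom_sq_le m
  calc (centralBinom m : ℝ) ^ 2 / (2 * m) ! * t ^ (2 * m) * (4 * t + 1)
      = (centralBinom m : ℝ) ^ 2 * t ^ (2 * m) / (2 * m) !
        + (2 * m + 1) * (centralBinom m : ℝ) ^ 2 * (4 * t * t ^ (2 * m)) / (2 * m + 1) ! := by
        rw [factorial_succ]; push_cast; field_simp; ring
    _ ≤ 16 ^ m * t ^ (2 * m) / (2 * m) ! + 16 ^ m * (4 * t * t ^ (2 * m)) / (2 * m + 1) ! := by
        gcongr
    _ = (4 * t) ^ (2 * m) / (2 * m) ! + (4 * t) ^ (2 * m + 1) / (2 * m + 1) ! := by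
        rw [pow_succ, pow_mul, pow_mul, mul_pow]; norm_num; ring

theorem sq_tsum_sq_pow_div_factorial_mul_le_exp {t : ℝ} (ht : 0 ≤ t) :
    (∑' k : ℕ, (t ^ k / k !) ^ 2) ^ 2 * (4 * t + 1) ≤ exp (4 * t) := by
  have hexp : HasSum (fun j : ℕ => (4 * t) ^ j / j !) (exp (4 * t)) := by
    rw [exp_eq_exp_ℝ]; exact NormedSpace.expSeries_div_hasSum_exp (4 * t)
  have heven : HasSum (fun m : ℕ => (4 * t) ^ (2 * m) / (2 * m) !) _ :=
    (hexp.summable.comp_injective (mul_right_injective₀ two_ne_zero)).hasSum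
  have hodd : HasSum (fun m : ℕ => (4 * t) ^ (2 * m + 1) / (2 * m + 1) !) _ :=
    (hexp.summable.comp_injective
      ((add_left_injective 1).comp (mul_right_injective₀ two_ne_zero))).hasSum
  rw [← (HasSum.even_add_odd (f := fun j : ℕ => (4 * t) ^ j / j !) heven hodd).unique hexp]
  exact hasSum_le (centralBinom_sq_div_factorial_mul_le ht)
    ((hasSum_sq_tsum_sq_pow_div_factorial t).mul_right _) (heven.add hodd)

theorem exp_neg_sq_mul_tsum_sq_pow_div_factorial_le {t : ℝ} (ht : 0 ≤ t) :
    exp (-t) ^ 2 * ∑' k : ℕ, (t ^ k / k !) ^ 2 ≤ 1 / √(4 * t + 1) := by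
  set S := ∑' k : ℕ, (t ^ k / k !) ^ 2
  have hexp : exp (-t) ^ 4 * exp (4 * t) = 1 := by
    rw [← exp_nat_mul, ← exp_add]; norm_num
  rw [one_div, ← sqrt_inv, le_sqrt (by positivity) (by positivity), ← one_div,
    le_div_iff₀ (by positivity)]
  calc (exp (-t) ^ 2 * S) ^ 2 * (4 * t + 1) = exp (-t) ^ 4 * (S ^ 2 * (4 * t + 1)) := by ring
    _ ≤ exp (-t) ^ 4 * exp (4 * t) := by gcongr; exact sq_tsum_sq_pow_div_factorial_mul_le_exp ht
    _ = 1 := hexp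

end Real

/-- For real `n > 0` and `x ≥ 0`,
`K_n(x) = ∑ (e^{-nx}(nx)^k/k!)² ≤ 1/√(4nx+1)`. -/
theorem stmt_19 (n : ℝ) (hn : 0 < n) (x : ℝ) (hx : 0 ≤ x) :
    (∑' k : ℕ, (Real.exp (-n * x) * (n * x) ^ k / (k.factorial : ℝ)) ^ 2) ≤
      1 / Real.sqrt (4 * n * x + 1) := by
  have hterm : ∀ k : ℕ, (Real.exp (-n * x) * (n * x) ^ k / k !) ^ 2
      = Real.exp (-(n * x)) ^ 2 * ((n * x) ^ k / k !) ^ 2 := fun k => by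
    rw [neg_mul]; ring
  rw [tsum_congr hterm, tsum_mul_left, show 4 * n * x + 1 = 4 * (n * x) + 1 by ring]
  exact Real.exp_neg_sq_mul_tsum_sq_pow_div_factorial_le (mul_nonneg hn.le hx)
end
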